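/- arXiv:1903.00725 — 8 statements merged into one kernel-verified Lean document; each statement's English description precedes it below -/
import Mathlib

section
/- Consider a finite discounted MDP with state set S, action set A, kernel P, reward r, and discount γ ∈ [0,1), together with a regularizer φ satisfying Assumption 2 and λ ≥ 0. Then for every value function V : S → ℝ and every state s ∈ S: (T V) s ≤ (T_λ V) s ≤ (T V) s + λ·φ(1/|A|). -/
open Filter

/-- A regularizer: on the interval (0,1], φ is nonincreasing, φ(1) = 0,
φ is differentiable, and `x ↦ x·φ(x)` is strictly concave. -/
def IsRegularizer (φ : ℝ → ℝ) : Prop :=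
  AntitoneOn φ (Set.Ioc 0 1) ∧ φ 1 = 0 ∧ DifferentiableOn ℝ φ (Set.Ioc 0 1) ∧
    StrictConcaveOn ℝ (Set.Ioc 0 1) (fun x => x * φ x)

/-- Assumption 2: `x·φ(x) → 0` as `x → 0⁺`. -/
def Assumption2 (φ : ℝ → ℝ) : Prop :=
  Tendsto (fun x => x * φ x) (nhdsWithin 0 (Set.Ioi 0)) (nhds 0)

/-- The regularized Bellman operator `T_λ`:
`(T_λ V) s = sup_{p ∈ Δ_A} ∑ a, (p a * (r s a + γ ∑ s', P s a s' * V s') + λ * f_φ(p a))`,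
where `f_φ(x) = x * φ x` (so `f_φ(0) = 0` automatically). -/
noncomputable def Treg {S A : Type*} [Fintype S] [Fintype A]
    (P : S → A → S → ℝ) (r : S → A → ℝ) (γ : ℝ) (φ : ℝ → ℝ) (lam : ℝ)
    (V : S → ℝ) (s : S) : ℝ :=
  sSup ((fun p : A → ℝ =>
      ∑ a, (p a * (r s a + γ * ∑ s', P s a s' * V s') + lam * (p a * φ (p a)))) ''
    {p | (∀ a, 0 ≤ p a) ∧ ∑ a, p a = 1})

section aux
variable {A : Type*} [Fintype A] [Nonempty A] {φ : ℝ → ℝ}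

lemma phi_nonneg (hφ : IsRegularizer φ) {x : ℝ} (hx : x ∈ Set.Ioc (0:ℝ) 1) : 0 ≤ φ x := by
  have := hφ.1 hx (Set.mem_Ioc.2 ⟨one_pos, le_refl 1⟩) hx.2
  rw [hφ.2.1] at this; exact this

lemma f_nonneg (hφ : IsRegularizer φ) {x : ℝ} (h0 : 0 ≤ x) (h1 : x ≤ 1) : 0 ≤ x * φ x := by
  rcases eq_or_lt_of_le h0 with h | h
  · simp [← h]
  · exact mul_nonneg h.le (phi_nonneg hφ ⟨h, h1⟩)

lemma sum_f_le (hφ : IsRegularizer φ) (p : A → ℝ) (hp0 : ∀ a, 0 ≤ p a)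
    (hp1 : ∑ a, p a = 1) :
    ∑ a, p a * φ (p a) ≤ φ (1 / (Fintype.card A : ℝ)) := by
  classical
  set T : Finset A := Finset.univ.filter (fun a => p a ≠ 0) with hT
  have hple : ∀ a, p a ≤ 1 := by
    intro a
    calc p a ≤ ∑ b, p b := Finset.single_le_sum (fun i _ => hp0 i) (Finset.mem_univ a)
    _ = 1 := hp1
  have hsumT : ∑ a ∈ T, p a = 1 := by
    rw [hT, Finset.sum_filter_ne_zero, hp1]
  have hTne : T.Nonempty := by
    by_contra h
    rw [Finset.not_nonempty_iff_eq_empty] at h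
    rw [h] at hsumT
    simp at hsumT
  have hk : 0 < (T.card : ℝ) := by
    exact_mod_cast Finset.card_pos.2 hTne
  have hmem : ∀ a ∈ T, p a ∈ Set.Ioc (0:ℝ) 1 := by
    intro a ha
    have : p a ≠ 0 := (Finset.mem_filter.1 ha).2
    exact ⟨lt_of_le_of_ne (hp0 a) (Ne.symm this), hple a⟩
  have hj := (hφ.2.2.2.concaveOn).le_map_sum
    (t := T) (w := fun _ => (T.card : ℝ)⁻¹) (p := p)
    (fun i _ => by positivity)
    (by simp [Finset.sum_const]; field_simp)
    hmem
  have havg : ∑ a ∈ T, (T.card : ℝ)⁻¹ • p a = (T.card : ℝ)⁻¹ := by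
    rw [← Finset.smul_sum, hsumT, smul_eq_mul, mul_one]
  rw [havg] at hj
  -- hj : ∑ a ∈ T, (T.card:ℝ)⁻¹ • (p a * φ (p a)) ≤ (T.card:ℝ)⁻¹ * φ ((T.card:ℝ)⁻¹)
  have hj2 : ∑ a ∈ T, p a * φ (p a) ≤ φ ((T.card : ℝ)⁻¹) := by
    have := mul_le_mul_of_nonneg_left hj (le_of_lt hk)
    rw [Finset.mul_sum] at this
    simp only [smul_eq_mul] at this
    calc ∑ a ∈ T, p a * φ (p a) = ∑ a ∈ T, (T.card : ℝ) * ((T.card : ℝ)⁻¹ * (p a * φ (p a))) := by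
          apply Finset.sum_congr rfl; intro a _; field_simp
    _ ≤ (T.card : ℝ) * ((T.card : ℝ)⁻¹ * φ ((T.card : ℝ)⁻¹)) := this
    _ = φ ((T.card : ℝ)⁻¹) := by field_simp
  have hsum_eq : ∑ a, p a * φ (p a) = ∑ a ∈ T, p a * φ (p a) := by
    symm
    apply Finset.sum_subset (Finset.subset_univ T)
    intro a _ ha
    have : p a = 0 := by
      by_contra h
      exact ha (Finset.mem_filter.2 ⟨Finset.mem_univ a, h⟩)
    simp [this]
  rw [hsum_eq]
  refine hj2.trans (hφ.1 ?_ ?_ ?_)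
  · have hn : 0 < (Fintype.card A : ℝ) := by
      exact_mod_cast Fintype.card_pos
    constructor
    · positivity
    · rw [one_div]
      exact inv_le_one_of_one_le₀ (by exact_mod_cast Fintype.card_pos : (1:ℝ) ≤ (Fintype.card A : ℝ))
  · exact ⟨by positivity, inv_le_one_of_one_le₀ (by exact_mod_cast Finset.card_pos.2 hTne : (1:ℝ) ≤ (T.card : ℝ))⟩
  · rw [one_div]
    apply inv_anti₀ hk
    exact_mod_cast Finset.card_le_univ T

end aux

section main
variable {A : Type*} [Fintype A] [Nonempty A] {φ : ℝ → ℝ}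

lemma g_le_bound (hφ : IsRegularizer φ) (c : A → ℝ) {l : ℝ} (hl : 0 ≤ l)
    (p : A → ℝ) (hp : (∀ a, 0 ≤ p a) ∧ ∑ a, p a = 1) :
    ∑ a, (p a * c a + l * (p a * φ (p a))) ≤
      Finset.univ.sup' Finset.univ_nonempty c + l * φ (1 / (Fintype.card A : ℝ)) := by
  rw [Finset.sum_add_distrib, ← Finset.mul_sum]
  have hple : ∀ a, p a ≤ 1 := fun a => by
    calc p a ≤ ∑ b, p b := Finset.single_le_sum (fun i _ => hp.1 i) (Finset.mem_univ a)
    _ = 1 := hp.2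
  gcongr
  · calc ∑ a, p a * c a ≤ ∑ a, p a * Finset.univ.sup' Finset.univ_nonempty c := by
          apply Finset.sum_le_sum
          intro a _
          exact mul_le_mul_of_nonneg_left (Finset.le_sup' c (Finset.mem_univ a)) (hp.1 a)
    _ = Finset.univ.sup' Finset.univ_nonempty c := by
          rw [← Finset.sum_mul, hp.2, one_mul]
  · exact sum_f_le hφ p hp.1 hp.2

end main

/-- Bounds of the regularized Bellman operator
Bellman operator `T = T_0`: `T V s ≤ T_λ V s ≤ T V s + λ·φ(1/|A|)`. -/
theorem Treg_bounds (S A : Type*) [Fintype S] [Fintype A] [Nonempty S] [Nonempty A]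
    (P : S → A → S → ℝ) (hP : ∀ s a s', 0 ≤ P s a s')
    (hPsum : ∀ s a, ∑ s', P s a s' = 1)
    (r : S → A → ℝ) (γ : ℝ) (hγ0 : 0 ≤ γ) (hγ1 : γ < 1)
    (φ : ℝ → ℝ) (hφ : IsRegularizer φ) (hA2 : Assumption2 φ)
    (lam : ℝ) (hlam : 0 ≤ lam) (V : S → ℝ) (s : S) :
    Treg P r γ φ 0 V s ≤ Treg P r γ φ lam V s ∧
      Treg P r γ φ lam V s ≤ Treg P r γ φ 0 V s + lam * φ (1 / (Fintype.card A : ℝ)) := by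
  classical
  set c : A → ℝ := fun a => r s a + γ * ∑ s', P s a s' * V s' with hc
  set Δ : Set (A → ℝ) := {p | (∀ a, 0 ≤ p a) ∧ ∑ a, p a = 1} with hΔ
  set g : ℝ → (A → ℝ) → ℝ := fun l p => ∑ a, (p a * c a + l * (p a * φ (p a))) with hg
  have hn : 0 < (Fintype.card A : ℝ) := by exact_mod_cast Fintype.card_pos
  have hΔne : Δ.Nonempty := by
    refine ⟨fun _ => (Fintype.card A : ℝ)⁻¹, fun a => by positivity, ?_⟩
    rw [Finset.sum_const, Finset.card_univ, nsmul_eq_mul]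
    field_simp
  have hTreg : ∀ l, Treg P r γ φ l V s = sSup (g l '' Δ) := fun l => rfl
  have hple : ∀ p ∈ Δ, ∀ a, p a ≤ 1 := by
    intro p hp a
    calc p a ≤ ∑ b, p b := Finset.single_le_sum (fun i _ => hp.1 i) (Finset.mem_univ a)
    _ = 1 := hp.2
  have hbdd : ∀ l, 0 ≤ l → BddAbove (g l '' Δ) := by
    intro l hl
    refine ⟨Finset.univ.sup' Finset.univ_nonempty c + l * φ (1 / (Fintype.card A : ℝ)), ?_⟩
    rintro x ⟨p, hp, rfl⟩
    exact g_le_bound hφ c hl p hp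
  constructor
  · rw [hTreg, hTreg]
    apply csSup_le (hΔne.image _)
    rintro x ⟨p, hp, rfl⟩
    have h1 : g 0 p ≤ g lam p := by
      apply Finset.sum_le_sum
      intro a _
      have := f_nonneg hφ (hp.1 a) (hple p hp a)
      nlinarith
    exact h1.trans (le_csSup (hbdd lam hlam) ⟨p, hp, rfl⟩)
  · rw [hTreg, hTreg]
    apply csSup_le (hΔne.image _)
    rintro x ⟨p, hp, rfl⟩
    have h1 : g lam p = g 0 p + lam * ∑ a, p a * φ (p a) := by
      simp only [hg, Finset.sum_add_distrib, ← Finset.mul_sum]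
      ring
    rw [h1]
    have h2 : g 0 p ≤ sSup (g 0 '' Δ) := le_csSup (hbdd 0 le_rfl) ⟨p, hp, rfl⟩
    have h3 : lam * ∑ a, p a * φ (p a) ≤ lam * φ (1 / (Fintype.card A : ℝ)) :=
      mul_le_mul_of_nonneg_left (sum_f_le hφ p hp.1 hp.2) hlam
    linarith
end

section
/- Consider a finite discounted MDP with state set S, action set A, kernel P, reward r, and discount γ ∈ [0,1), together with a regularizer φ satisfying Assumption 2 and λ ≥ 0. Then the regularized Bellman operator T_λ has a unique fixed point V*_λ : S → ℝ (i.e., T_λ V*_λ = V*_λ), and for every initial value function V₀ : S → ℝ and every n ∈ ℕ, ‖T_λⁿ V₀ − V*_λ‖_∞ ≤ γⁿ · ‖V₀ − V*_λ‖_∞; in particular the iterates T_λⁿ V₀ converge to V*_λ in supremum norm. -/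
/- The regularization term `λ · f_φ(p a)` does not depend on `V`, so for a fixed policy `p` the
objective inside `T_λ` moves by at most `γ ‖V - W‖_∞` when `V` is replaced by `W`: both `p` and
every row of `P` are probability vectors. Passing to the supremum over `p` makes `T_λ` a
`γ`-contraction of `(S → ℝ, ‖·‖_∞)`, and Banach's fixed point theorem does the rest. The supremum
is finite because `x φ(x)` is bounded above on `[0, 1]`: near `0` by Assumption 2, and away from
`0` because `φ` is nonincreasing. -/

open Filter

open Topology Set

lemma iSup_abs_sub_eq_dist {S : Type*} [Fintype S] (f g : S → ℝ) :
    ⨆ s, |f s - g s| = dist f g := by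
  simp_rw [← Real.dist_eq]
  exact le_antisymm (Real.iSup_le (fun s => dist_le_pi_dist f g s) dist_nonneg)
    ((dist_pi_le_iff (Real.iSup_nonneg fun _ => dist_nonneg)).2
      fun s => le_ciSup (f := fun s => dist (f s) (g s)) (finite_range _).bddAbove s)

lemma abs_sum_mul_le_of_mem_stdSimplex {ι : Type*} [Fintype ι] {w x : ι → ℝ}
    (hw : w ∈ stdSimplex ℝ ι) {c : ℝ} (hx : ∀ i, |x i| ≤ c) : |∑ i, w i * x i| ≤ c :=
  calc |∑ i, w i * x i| ≤ ∑ i, w i * |x i| := by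
        refine (Finset.abs_sum_le_sum_abs _ _).trans_eq ?_
        simp only [abs_mul, abs_of_nonneg (hw.1 _)]
    _ ≤ ∑ i, w i * c :=
        Finset.sum_le_sum fun i _ => mul_le_mul_of_nonneg_left (hx i) (hw.1 i)
    _ = c := by rw [← Finset.sum_mul, hw.2, one_mul]

lemma sSup_image_le_sSup_image_add {α : Type*} {D : Set α} {f g : α → ℝ} {c : ℝ} (hc : 0 ≤ c)
    (hg : BddAbove (g '' D)) (hfg : ∀ x ∈ D, f x ≤ g x + c) :
    sSup (f '' D) ≤ sSup (g '' D) + c := by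
  rcases D.eq_empty_or_nonempty with rfl | hD
  · simpa using hc
  refine csSup_le (hD.image f) (forall_mem_image.2 fun x hx => (hfg x hx).trans ?_)
  gcongr
  exact le_csSup hg (mem_image_of_mem g hx)

lemma abs_sSup_image_sub_sSup_image_le {α : Type*} {D : Set α} {f g : α → ℝ} {c : ℝ}
    (hc : 0 ≤ c) (hf : BddAbove (f '' D)) (hg : BddAbove (g '' D))
    (hfg : ∀ x ∈ D, |f x - g x| ≤ c) : |sSup (f '' D) - sSup (g '' D)| ≤ c := by
  have hfg' : ∀ x ∈ D, f x ≤ g x + c := fun x hx => by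
    linarith [(abs_sub_le_iff.1 (hfg x hx)).1]
  have hgf : ∀ x ∈ D, g x ≤ f x + c := fun x hx => by
    linarith [(abs_sub_le_iff.1 (hfg x hx)).2]
  rw [abs_sub_le_iff]
  constructor
  · linarith [sSup_image_le_sSup_image_add hc hg hfg']
  · linarith [sSup_image_le_sSup_image_add hc hf hgf]

lemma bddAbove_image_sum_stdSimplex {ι : Type*} [Fintype ι] {g : ι → ℝ → ℝ}
    (hg : ∀ i, BddAbove (g i '' Icc 0 1)) :
    BddAbove ((fun p => ∑ i, g i (p i)) '' stdSimplex ℝ ι) := by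
  choose M hM using hg
  exact ⟨∑ i, M i, forall_mem_image.2 fun p hp => Finset.sum_le_sum fun i _ =>
    hM i (mem_image_of_mem _ (mem_Icc_of_mem_stdSimplex hp i))⟩

lemma bddAbove_mul_self_image_Icc {φ : ℝ → ℝ} (hφ : AntitoneOn φ (Ioc 0 1))
    (hA2 : Assumption2 φ) : BddAbove ((fun x => x * φ x) '' Icc 0 1) := by
  obtain ⟨u, hu, hsmall⟩ := mem_nhdsGT_iff_exists_Ioc_subset.1
    (hA2.eventually (gt_mem_nhds one_pos))
  set d := min u 1
  have hd : d ∈ Ioc (0 : ℝ) 1 := ⟨lt_min hu one_pos, min_le_right u 1⟩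
  refine ⟨max 1 |φ d|, forall_mem_image.2 fun x ⟨hx0, hx1⟩ => ?_⟩
  rcases hx0.eq_or_lt with rfl | hx0
  · simp
  rcases le_total x d with hxd | hdx
  · exact (hsmall ⟨hx0, hxd.trans (min_le_left u 1)⟩).le.trans (le_max_left _ _)
  · calc x * φ x ≤ x * φ d := by gcongr; exact hφ hd ⟨hx0, hx1⟩ hdx
      _ ≤ |φ d| := by nlinarith [le_abs_self (φ d), neg_abs_le (φ d)]
      _ ≤ max 1 |φ d| := le_max_right _ _

section Bellman

variable {S A : Type*} [Fintype S] [Fintype A] {P : S → A → S → ℝ} {r : S → A → ℝ} {γ : ℝ}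
  {φ : ℝ → ℝ} {lam : ℝ}

noncomputable def bellmanObjective (P : S → A → S → ℝ) (r : S → A → ℝ) (γ : ℝ) (φ : ℝ → ℝ)
    (lam : ℝ) (V : S → ℝ) (s : S) (p : A → ℝ) : ℝ :=
  ∑ a, (p a * (r s a + γ * ∑ s', P s a s' * V s') + lam * (p a * φ (p a)))

lemma Treg_eq_sSup_bellmanObjective (V : S → ℝ) (s : S) :
    Treg P r γ φ lam V s = sSup (bellmanObjective P r γ φ lam V s '' stdSimplex ℝ A) :=
  rfl

lemma bddAbove_bellmanObjective (hφ : AntitoneOn φ (Ioc 0 1)) (hA2 : Assumption2 φ)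
    (hlam : 0 ≤ lam) (V : S → ℝ) (s : S) :
    BddAbove (bellmanObjective P r γ φ lam V s '' stdSimplex ℝ A) := by
  obtain ⟨M, hM⟩ := bddAbove_mul_self_image_Icc hφ hA2
  refine bddAbove_image_sum_stdSimplex
    (g := fun a x => x * (r s a + γ * ∑ s', P s a s' * V s') + lam * (x * φ x))
    fun a => ⟨|r s a + γ * ∑ s', P s a s' * V s'| + lam * M, forall_mem_image.2 fun x hx => ?_⟩
  have hreg := mul_le_mul_of_nonneg_left (hM (mem_image_of_mem _ hx)) hlam
  have hq := le_abs_self (r s a + γ * ∑ s', P s a s' * V s')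
  have hq' := neg_abs_le (r s a + γ * ∑ s', P s a s' * V s')
  nlinarith [hx.1, hx.2]

lemma bellmanObjective_sub (V W : S → ℝ) (s : S) (p : A → ℝ) :
    bellmanObjective P r γ φ lam V s p - bellmanObjective P r γ φ lam W s p =
      γ * ∑ a, p a * ∑ s', P s a s' * (V s' - W s') := by
  unfold bellmanObjective
  rw [← Finset.sum_sub_distrib, Finset.mul_sum]
  congr 1 with a
  simp only [mul_sub, Finset.sum_sub_distrib]
  ring

lemma abs_bellmanObjective_sub_le (hP : ∀ s a, P s a ∈ stdSimplex ℝ S) (hγ : 0 ≤ γ)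
    (V W : S → ℝ) (s : S) {p : A → ℝ} (hp : p ∈ stdSimplex ℝ A) :
    |bellmanObjective P r γ φ lam V s p - bellmanObjective P r γ φ lam W s p| ≤
      γ * dist V W := by
  rw [bellmanObjective_sub, abs_mul, abs_of_nonneg hγ]
  gcongr
  refine abs_sum_mul_le_of_mem_stdSimplex hp fun a => abs_sum_mul_le_of_mem_stdSimplex (hP s a)
    fun s' => ?_
  rw [← Real.dist_eq]
  exact dist_le_pi_dist V W s'

lemma lipschitzWith_Treg (hP : ∀ s a, P s a ∈ stdSimplex ℝ S) (hγ : 0 ≤ γ)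
    (hφ : AntitoneOn φ (Ioc 0 1)) (hA2 : Assumption2 φ) (hlam : 0 ≤ lam) :
    LipschitzWith ⟨γ, hγ⟩ (Treg (A := A) P r γ φ lam) := by
  refine LipschitzWith.of_dist_le_mul fun V W => (dist_pi_le_iff (by positivity)).2 fun s => ?_
  rw [Real.dist_eq, Treg_eq_sSup_bellmanObjective, Treg_eq_sSup_bellmanObjective]
  exact abs_sSup_image_sub_sSup_image_le (by positivity)
    (bddAbove_bellmanObjective hφ hA2 hlam V s) (bddAbove_bellmanObjective hφ hA2 hlam W s)
    fun p hp => abs_bellmanObjective_sub_le hP hγ V W s hp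

end Bellman

theorem Treg_fixed_point_general (S A : Type*) [Fintype S] [Fintype A]
    (P : S → A → S → ℝ) (hP : ∀ s a s', 0 ≤ P s a s')
    (hPsum : ∀ s a, ∑ s', P s a s' = 1)
    (r : S → A → ℝ) (γ : ℝ) (hγ0 : 0 ≤ γ) (hγ1 : γ < 1)
    (φ : ℝ → ℝ) (hφ : IsRegularizer φ) (hA2 : Assumption2 φ)
    (lam : ℝ) (hlam : 0 ≤ lam) :
    (∃! Vstar : S → ℝ, Treg P r γ φ lam Vstar = Vstar) ∧
      ∀ Vstar : S → ℝ, Treg P r γ φ lam Vstar = Vstar →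
        ∀ V₀ : S → ℝ,
          (∀ n : ℕ, (⨆ s, |(Treg P r γ φ lam)^[n] V₀ s - Vstar s|) ≤
              γ ^ n * ⨆ s, |V₀ s - Vstar s|) ∧
          Tendsto (fun n : ℕ => ⨆ s, |(Treg P r γ φ lam)^[n] V₀ s - Vstar s|)
            atTop (nhds 0) := by
  set T := Treg P r γ φ lam
  have hT : ContractingWith ⟨γ, hγ0⟩ T :=
    ⟨hγ1, lipschitzWith_Treg (fun s a => ⟨hP s a, hPsum s a⟩) hγ0 hφ.1 hA2 hlam⟩
  refine ⟨⟨hT.fixedPoint, hT.fixedPoint_isFixedPt, fun V hV => hT.fixedPoint_unique hV⟩,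
    fun Vstar hVstar V₀ => ?_⟩
  have hiter (n : ℕ) : dist (T^[n] V₀) Vstar ≤ γ ^ n * dist V₀ Vstar := by
    have := (hT.2.iterate n).dist_le_mul V₀ Vstar
    rw [Function.iterate_fixed hVstar] at this
    exact this.trans_eq (congrArg (· * dist V₀ Vstar) (NNReal.coe_pow _ n))
  simp only [iSup_abs_sub_eq_dist]
  refine ⟨hiter, squeeze_zero (fun _ => dist_nonneg) hiter ?_⟩
  simpa using (tendsto_pow_atTop_nhds_zero_of_lt_one hγ0 hγ1).mul_const (dist V₀ Vstar)

/-- The regularized Bellman operator `T_λ` has a unique fixed point `V*_λ`, the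
iterates satisfy `‖T_λⁿ V₀ − V*_λ‖_∞ ≤ γⁿ·‖V₀ − V*_λ‖_∞`, and in particular the
iterates converge to `V*_λ` in supremum norm. -/
theorem Treg_fixed_point (S A : Type*) [Fintype S] [Fintype A] [Nonempty S] [Nonempty A]
    (P : S → A → S → ℝ) (hP : ∀ s a s', 0 ≤ P s a s')
    (hPsum : ∀ s a, ∑ s', P s a s' = 1)
    (r : S → A → ℝ) (γ : ℝ) (hγ0 : 0 ≤ γ) (hγ1 : γ < 1)
    (φ : ℝ → ℝ) (hφ : IsRegularizer φ) (hA2 : Assumption2 φ)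
    (lam : ℝ) (hlam : 0 ≤ lam) :
    (∃! Vstar : S → ℝ, Treg P r γ φ lam Vstar = Vstar) ∧
      ∀ Vstar : S → ℝ, Treg P r γ φ lam Vstar = Vstar →
        ∀ V₀ : S → ℝ,
          (∀ n : ℕ, (⨆ s, |(Treg P r γ φ lam)^[n] V₀ s - Vstar s|) ≤
              γ ^ n * ⨆ s, |V₀ s - Vstar s|) ∧
          Tendsto (fun n : ℕ => ⨆ s, |(Treg P r γ φ lam)^[n] V₀ s - Vstar s|)
            atTop (nhds 0) :=
  Treg_fixed_point_general S A P hP hPsum r γ hγ0 hγ1 φ hφ hA2 lam hlam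
end

section
/- Consider a finite discounted MDP with state set S, action set A, kernel P, reward r, and discount γ ∈ [0,1), together with a regularizer φ satisfying Assumption 2 and λ ≥ 0. Then for every value function V₀ : S → ℝ, every n ≥ 1, and every state s ∈ S: (Tⁿ V₀) s ≤ (T_λⁿ V₀) s ≤ (Tⁿ V₀) s + λ·φ(1/|A|)·∑_{t=0}^{n−1} γᵗ, where T = T₀ is the unregularized Bellman operator and Tⁿ denotes n-fold application. -/
open Filter

/-!
On the simplex, `0 ≤ ∑ₐ pₐ φ(pₐ) ≤ φ(1/|A|)`: the lower bound because `φ ≥ φ(1) = 0`,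
the upper one by Jensen for the concave `x ↦ x φ(x)` on the support of `p` (of size `k ≤ |A|`),
which gives `φ(1/k)`, and monotonicity of `φ`. Hence `T ≤ T_λ ≤ T + λ φ(1/|A|)` pointwise.
Iterating, `T` is monotone and `T (V + c) ≤ T V + γ c`, so the one-step error `λ φ(1/|A|)`
accumulates geometrically.
-/

open Finset Set

lemma csSup_image_le_csSup_image_add {α : Type*} {f g : α → ℝ} {s : Set α} (hs : s.Nonempty)
    (hg : BddAbove (g '' s)) {c : ℝ} (hfg : ∀ x ∈ s, f x ≤ g x + c) :
    sSup (f '' s) ≤ sSup (g '' s) + c :=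
  csSup_le (hs.image f) <| by
    rintro _ ⟨x, hx, rfl⟩
    exact (hfg x hx).trans (add_le_add_left (le_csSup hg ⟨x, hx, rfl⟩) c)

lemma sum_mul_le_inv_card_of_concaveOn {ι : Type*} {φ : ℝ → ℝ}
    (hφ : ConcaveOn ℝ (Ioc 0 1) (fun x => x * φ x)) {t : Finset ι} {p : ι → ℝ}
    (hp : ∀ i ∈ t, p i ∈ Ioc (0 : ℝ) 1) (hsum : ∑ i ∈ t, p i = 1) :
    ∑ i ∈ t, p i * φ (p i) ≤ φ (#t : ℝ)⁻¹ := by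
  have ht : t.Nonempty := Finset.nonempty_of_sum_ne_zero (hsum ▸ one_ne_zero)
  have hk : (0 : ℝ) < #t := by exact_mod_cast ht.card_pos
  have hw : ∑ _i ∈ t, (#t : ℝ)⁻¹ = 1 := by simp [hk.ne']
  have hJ := hφ.le_map_sum (fun _ _ => by positivity) hw hp
  simp only [smul_eq_mul, ← Finset.mul_sum, hsum, mul_one] at hJ
  have := mul_le_mul_of_nonneg_left hJ hk.le
  rwa [← mul_assoc, ← mul_assoc, mul_inv_cancel₀ hk.ne', one_mul, one_mul] at this

namespace IsRegularizer

variable {φ : ℝ → ℝ}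

lemma nonneg (hφ : IsRegularizer φ) {x : ℝ} (hx : x ∈ Ioc (0 : ℝ) 1) : 0 ≤ φ x :=
  hφ.2.1 ▸ hφ.1 hx ⟨zero_lt_one, le_rfl⟩ hx.2

variable {A : Type*} [Fintype A] {p : A → ℝ}

lemma sum_mul_nonneg (hφ : IsRegularizer φ) (hp : p ∈ stdSimplex ℝ A) :
    0 ≤ ∑ a, p a * φ (p a) := by
  refine Finset.sum_nonneg fun a _ => ?_
  rcases (hp.1 a).eq_or_lt with h | h
  · simp [← h]
  · exact mul_nonneg h.le (hφ.nonneg ⟨h, (mem_Icc_of_mem_stdSimplex hp a).2⟩)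

lemma sum_mul_le (hφ : IsRegularizer φ) (hp : p ∈ stdSimplex ℝ A) :
    ∑ a, p a * φ (p a) ≤ φ (1 / (Fintype.card A : ℝ)) := by
  classical
  -- concavity is only assumed on `(0, 1]`, so Jensen is applied on the support of `p`
  set t := univ.filter (fun a => 0 < p a)
  have hpos : ∀ a, p a ≠ 0 → 0 < p a := fun a h => (hp.1 a).lt_of_ne' h
  have hsum : ∑ a ∈ t, p a = 1 := by
    rw [Finset.sum_filter_of_ne fun a _ => hpos a, hp.2]
  have hsupp : ∑ a ∈ t, p a * φ (p a) = ∑ a, p a * φ (p a) :=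
    Finset.sum_filter_of_ne fun a _ h => hpos a (left_ne_zero_of_mul h)
  have ht : (1 : ℝ) ≤ #t := by
    exact_mod_cast (Finset.nonempty_of_sum_ne_zero (hsum ▸ one_ne_zero)).card_pos
  have htA : (#t : ℝ) ≤ Fintype.card A := by exact_mod_cast Finset.card_le_univ t
  have hA : (0 : ℝ) < Fintype.card A := by linarith
  rw [← hsupp]
  refine (sum_mul_le_inv_card_of_concaveOn hφ.2.2.2.concaveOn
    (fun a ha => ⟨(Finset.mem_filter.1 ha).2, (mem_Icc_of_mem_stdSimplex hp a).2⟩) hsum).trans ?_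
  refine hφ.1 ⟨by positivity, (div_le_one hA).2 (by linarith)⟩
    ⟨by positivity, inv_le_one_of_one_le₀ ht⟩ ?_
  rw [one_div]
  exact inv_anti₀ (by positivity) htA

end IsRegularizer

section Bellman

variable {S A : Type*} [Fintype S]
  {P : S → A → S → ℝ} {r : S → A → ℝ} {γ : ℝ} {φ : ℝ → ℝ} {lam : ℝ}

def qValue (P : S → A → S → ℝ) (r : S → A → ℝ) (γ : ℝ) (V : S → ℝ) (s : S) (a : A) : ℝ :=
  r s a + γ * ∑ s', P s a s' * V s'

lemma qValue_mono (hP : ∀ s a s', 0 ≤ P s a s') (hγ : 0 ≤ γ) {V W : S → ℝ} (hVW : V ≤ W)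
    (s : S) (a : A) : qValue P r γ V s a ≤ qValue P r γ W s a :=
  add_le_add_right (mul_le_mul_of_nonneg_left
    (Finset.sum_le_sum fun s' _ => mul_le_mul_of_nonneg_left (hVW s') (hP s a s')) hγ) _

lemma qValue_add_const (hPsum : ∀ s a, ∑ s', P s a s' = 1) (V : S → ℝ) (c : ℝ) (s : S) (a : A) :
    qValue P r γ (fun s' => V s' + c) s a = qValue P r γ V s a + γ * c := by
  simp only [qValue, mul_add, Finset.sum_add_distrib, ← Finset.sum_mul, hPsum s a, one_mul]
  ring

variable [Fintype A]

lemma Treg_eq_sSup (V : S → ℝ) (s : S) :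
    Treg P r γ φ lam V s = sSup ((fun p : A → ℝ =>
      ∑ a, p a * qValue P r γ V s a + lam * ∑ a, p a * φ (p a)) '' stdSimplex ℝ A) := by
  simp only [Treg, qValue, Finset.sum_add_distrib, Finset.mul_sum]
  rfl

lemma Treg_bddAbove (hφ : IsRegularizer φ) (hlam : 0 ≤ lam) (V : S → ℝ) (s : S) :
    BddAbove ((fun p : A → ℝ =>
      ∑ a, p a * qValue P r γ V s a + lam * ∑ a, p a * φ (p a)) '' stdSimplex ℝ A) := by
  refine ⟨∑ a, |qValue P r γ V s a| + lam * φ (1 / (Fintype.card A : ℝ)), ?_⟩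
  rintro _ ⟨p, hp, rfl⟩
  refine add_le_add (Finset.sum_le_sum fun a _ => ?_)
    (mul_le_mul_of_nonneg_left (hφ.sum_mul_le hp) hlam)
  obtain ⟨hp0, hp1⟩ := mem_Icc_of_mem_stdSimplex hp a
  calc p a * qValue P r γ V s a ≤ p a * |qValue P r γ V s a| :=
        mul_le_mul_of_nonneg_left (le_abs_self _) hp0
    _ ≤ |qValue P r γ V s a| := mul_le_of_le_one_left (abs_nonneg _) hp1

variable [Nonempty A]

lemma stdSimplex_nonempty : (stdSimplex ℝ A).Nonempty := by
  classical
  exact ⟨_, single_mem_stdSimplex ℝ (Classical.arbitrary A)⟩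

lemma Treg_zero_le (hφ : IsRegularizer φ) (hlam : 0 ≤ lam) (V : S → ℝ) (s : S) :
    Treg P r γ φ 0 V s ≤ Treg P r γ φ lam V s := by
  rw [Treg_eq_sSup, Treg_eq_sSup]
  refine (csSup_image_le_csSup_image_add stdSimplex_nonempty (Treg_bddAbove hφ hlam V s)
    (c := 0) fun p hp => ?_).trans_eq (add_zero _)
  have := mul_nonneg hlam (hφ.sum_mul_nonneg hp)
  linarith

lemma Treg_le_zero_add (hφ : IsRegularizer φ) (hlam : 0 ≤ lam) (V : S → ℝ) (s : S) :
    Treg P r γ φ lam V s ≤ Treg P r γ φ 0 V s + lam * φ (1 / (Fintype.card A : ℝ)) := by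
  rw [Treg_eq_sSup, Treg_eq_sSup]
  refine csSup_image_le_csSup_image_add stdSimplex_nonempty (Treg_bddAbove hφ le_rfl V s)
    fun p hp => ?_
  have := mul_le_mul_of_nonneg_left (hφ.sum_mul_le hp) hlam
  linarith

lemma Treg_mono (hφ : IsRegularizer φ) (hlam : 0 ≤ lam) (hP : ∀ s a s', 0 ≤ P s a s')
    (hγ : 0 ≤ γ) : Monotone (Treg P r γ φ lam) := by
  intro V W hVW s
  rw [Treg_eq_sSup, Treg_eq_sSup]
  refine (csSup_image_le_csSup_image_add stdSimplex_nonempty (Treg_bddAbove hφ hlam W s)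
    (c := 0) fun p hp => ?_).trans_eq (add_zero _)
  have : ∑ a, p a * qValue P r γ V s a ≤ ∑ a, p a * qValue P r γ W s a :=
    Finset.sum_le_sum fun a _ => mul_le_mul_of_nonneg_left (qValue_mono hP hγ hVW s a) (hp.1 a)
  linarith

lemma Treg_add_const_le (hφ : IsRegularizer φ) (hlam : 0 ≤ lam)
    (hPsum : ∀ s a, ∑ s', P s a s' = 1) (V : S → ℝ) (c : ℝ) (s : S) :
    Treg P r γ φ lam (fun s' => V s' + c) s ≤ Treg P r γ φ lam V s + γ * c := by
  rw [Treg_eq_sSup, Treg_eq_sSup]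
  refine csSup_image_le_csSup_image_add stdSimplex_nonempty (Treg_bddAbove hφ hlam V s)
    fun p hp => le_of_eq ?_
  simp only [qValue_add_const hPsum, mul_add, Finset.sum_add_distrib, ← Finset.sum_mul, hp.2]
  ring

end Bellman

lemma iterate_le_iterate_add_geom_sum {S : Type*} {T U : (S → ℝ) → S → ℝ} {γ κ : ℝ}
    (hT : Monotone T) (hTc : ∀ V c s, T (fun s' => V s' + c) s ≤ T V s + γ * c)
    (hUT : ∀ V s, U V s ≤ T V s + κ) (V : S → ℝ) (n : ℕ) (s : S) :
    U^[n] V s ≤ T^[n] V s + κ * ∑ t ∈ range n, γ ^ t := by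
  induction n generalizing s with
  | zero => simp
  | succ n ih =>
    rw [Function.iterate_succ_apply', Function.iterate_succ_apply']
    calc U (U^[n] V) s
        ≤ T (U^[n] V) s + κ := hUT _ s
      _ ≤ T (fun s' => T^[n] V s' + κ * ∑ t ∈ range n, γ ^ t) s + κ := by
        gcongr
        exact hT (fun s' => ih s') s
      _ ≤ T (T^[n] V) s + γ * (κ * ∑ t ∈ range n, γ ^ t) + κ := by gcongr; exact hTc _ _ s
      _ = T (T^[n] V) s + κ * ∑ t ∈ range (n + 1), γ ^ t := by rw [geom_sum_succ]; ring

theorem Treg_iterate_bounds_general (S A : Type*) [Fintype S] [Fintype A] [Nonempty A]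
    (P : S → A → S → ℝ) (hP : ∀ s a s', 0 ≤ P s a s')
    (hPsum : ∀ s a, ∑ s', P s a s' = 1)
    (r : S → A → ℝ) (γ : ℝ) (hγ0 : 0 ≤ γ)
    (φ : ℝ → ℝ) (hφ : IsRegularizer φ)
    (lam : ℝ) (hlam : 0 ≤ lam) (V₀ : S → ℝ) (n : ℕ) (s : S) :
    (Treg P r γ φ 0)^[n] V₀ s ≤ (Treg P r γ φ lam)^[n] V₀ s ∧
      (Treg P r γ φ lam)^[n] V₀ s ≤ (Treg P r γ φ 0)^[n] V₀ s +
        lam * φ (1 / (Fintype.card A : ℝ)) * ∑ t ∈ Finset.range n, γ ^ t := by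
  have hT : Monotone (Treg P r γ φ 0) := Treg_mono hφ le_rfl hP hγ0
  exact ⟨hT.iterate_le_of_le (fun V s => Treg_zero_le hφ hlam V s) n V₀ s,
    iterate_le_iterate_add_geom_sum hT (Treg_add_const_le hφ le_rfl hPsum)
      (Treg_le_zero_add hφ hlam) V₀ n s⟩

/-- Sandwich bound for the iterates of the regularized Bellman operator:
`Tⁿ V₀ s ≤ T_λⁿ V₀ s ≤ Tⁿ V₀ s + λ·φ(1/|A|)·∑_{t<n} γᵗ` for every `n ≥ 1`. -/
theorem Treg_iterate_bounds (S A : Type*) [Fintype S] [Fintype A] [Nonempty S] [Nonempty A]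
    (P : S → A → S → ℝ) (hP : ∀ s a s', 0 ≤ P s a s')
    (hPsum : ∀ s a, ∑ s', P s a s' = 1)
    (r : S → A → ℝ) (γ : ℝ) (hγ0 : 0 ≤ γ) (hγ1 : γ < 1)
    (φ : ℝ → ℝ) (hφ : IsRegularizer φ) (hA2 : Assumption2 φ)
    (lam : ℝ) (hlam : 0 ≤ lam) (V₀ : S → ℝ) (n : ℕ) (hn : 1 ≤ n) (s : S) :
    (Treg P r γ φ 0)^[n] V₀ s ≤ (Treg P r γ φ lam)^[n] V₀ s ∧
      (Treg P r γ φ lam)^[n] V₀ s ≤ (Treg P r γ φ 0)^[n] V₀ s +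
        lam * φ (1 / (Fintype.card A : ℝ)) * ∑ t ∈ Finset.range n, γ ^ t :=
  Treg_iterate_bounds_general S A P hP hPsum r γ hγ0 φ hφ lam hlam V₀ n s
end

section
/- Let A be a nonempty finite set, let φ be a regularizer satisfying Assumption 2, let λ > 0, and let Q : A → ℝ. Suppose f'_φ(x) = φ(x) + x·φ'(x) tends to +∞ as x → 0⁺. Then every maximizer p ∈ Δ_A of the per-state regularized objective F_λ(p) = ∑_a (p a · Q a + λ·f_φ(p a)) satisfies p a > 0 for every a ∈ A; i.e., the regularized optimal policy is not sparse. -/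
open Filter

/-- The derivative of `f_φ(x) = x·φ(x)` on (0,1], namely `f'_φ(x) = φ(x) + x·φ'(x)`. -/
noncomputable def fderivPhi (φ : ℝ → ℝ) (x : ℝ) : ℝ :=
  φ x + x * derivWithin φ (Set.Ioc 0 1) x

lemma anti_derivWithin_nonpos {φ : ℝ → ℝ} (hA : AntitoneOn φ (Set.Ioc 0 1))
    (hD : DifferentiableOn ℝ φ (Set.Ioc 0 1)) {t : ℝ} (ht : t ∈ Set.Ioo (0:ℝ) 1) :
    derivWithin φ (Set.Ioc 0 1) t ≤ 0 := by
  have hts : t ∈ Set.Ioc (0:ℝ) 1 := ⟨ht.1, ht.2.le⟩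
  have hd := (hD t hts).hasDerivWithinAt
  rw [hasDerivWithinAt_iff_tendsto_slope] at hd
  have hsub : Set.Ioo t 1 ⊆ Set.Ioc 0 1 \ {t} := fun y hy =>
    ⟨⟨ht.1.trans hy.1, hy.2.le⟩, ne_of_gt hy.1⟩
  have hne1 : (nhdsWithin t (Set.Ioo t 1)).NeBot := by
    rw [← mem_closure_iff_nhdsWithin_neBot, closure_Ioo ht.2.ne]
    exact ⟨le_refl t, ht.2.le⟩
  haveI := hne1
  have hne : (nhdsWithin t (Set.Ioc 0 1 \ {t})).NeBot :=
    Filter.neBot_of_le (nhdsWithin_mono t hsub)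
  refine le_of_tendsto hd ?_
  filter_upwards [self_mem_nhdsWithin] with y hy
  obtain ⟨hy1, hy2⟩ := hy
  have hy2' : y ≠ t := hy2
  rcases lt_or_gt_of_ne hy2' with h | h
  · have : φ t ≤ φ y := hA hy1 hts h.le
    rw [slope_def_field]
    exact div_nonpos_of_nonneg_of_nonpos (by linarith) (by linarith)
  · have : φ y ≤ φ t := hA hts hy1 h.le
    rw [slope_def_field]
    exact div_nonpos_of_nonpos_of_nonneg (by linarith) (by linarith)

/-- If `f'_φ(x) → +∞` as `x → 0⁺`, every maximizer of the per-state regularized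
objective `F_λ(p) = ∑ a, (p a · Q a + λ·f_φ(p a))` over the simplex assigns positive
probability to every action: the regularized optimal policy is not sparse. -/
theorem maximizer_pos_of_fderiv_tendsto_atTop (A : Type*) [Fintype A] [Nonempty A]
    (φ : ℝ → ℝ) (hφ : IsRegularizer φ) (hA2 : Assumption2 φ)
    (lam : ℝ) (hlam : 0 < lam) (Q : A → ℝ)
    (hfd : Tendsto (fderivPhi φ) (nhdsWithin 0 (Set.Ioi 0)) atTop)
    (p : A → ℝ) (hp0 : ∀ a, 0 ≤ p a) (hp1 : ∑ a, p a = 1)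
    (hmax : ∀ q : A → ℝ, (∀ a, 0 ≤ q a) → (∑ a, q a = 1) →
      (∑ a, (q a * Q a + lam * (q a * φ (q a)))) ≤
        ∑ a, (p a * Q a + lam * (p a * φ (p a)))) :
    ∀ a, 0 < p a := by
  classical
  obtain ⟨hanti, hφ1, hdiff, hsc⟩ := hφ
  have hconc : ConcaveOn ℝ (Set.Ioc 0 1) (fun x => x * φ x) := hsc.concaveOn
  intro a
  rcases (hp0 a).lt_or_eq with h | h
  · exact h
  exfalso
  have hpa : p a = 0 := h.symm
  -- find b with positive mass
  have hb : ∃ b, 0 < p b := by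
    by_contra hb
    push_neg at hb
    have : ∑ c, p c = 0 :=
      Finset.sum_eq_zero fun c _ => le_antisymm (hb c) (hp0 c)
    rw [hp1] at this; norm_num at this
  obtain ⟨b, hpb⟩ := hb
  have hab : a ≠ b := by
    intro hEq
    rw [hEq] at hpa
    exact absurd hpa (ne_of_gt hpb)
  have hpb1 : p b ≤ 1 := by
    rw [← hp1]
    exact Finset.single_le_sum (fun c _ => hp0 c) (Finset.mem_univ b)
  set f : ℝ → ℝ := fun x => x * φ x with hf
  set C : ℝ := (f (p b / 2) - f (p b / 4)) / (p b / 4) with hC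
  -- φ → atTop as x → 0⁺
  have hφtop : Tendsto φ (nhdsWithin 0 (Set.Ioi 0)) atTop := by
    have hle : fderivPhi φ ≤ᶠ[nhdsWithin 0 (Set.Ioi 0)] φ := by
      filter_upwards [Ioo_mem_nhdsGT_of_mem (Set.mem_Ico.2 ⟨le_refl (0:ℝ), one_pos⟩)] with t ht
      have hd := anti_derivWithin_nonpos hanti hdiff ht
      have : t * derivWithin φ (Set.Ioc 0 1) t ≤ 0 :=
        mul_nonpos_of_nonneg_of_nonpos ht.1.le hd
      simp only [fderivPhi]
      linarith
    exact tendsto_atTop_mono' _ hle hfd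
  -- choose small t
  have hEv : ∀ᶠ t in nhdsWithin 0 (Set.Ioi 0),
      ((Q b - Q a + lam * C + 1) / lam < φ t ∧ t ∈ Set.Ioo (0:ℝ) (p b / 4)) := by
    filter_upwards [hφtop.eventually_gt_atTop ((Q b - Q a + lam * C + 1) / lam),
      Ioo_mem_nhdsGT_of_mem (show (0:ℝ) ∈ Set.Ico (0:ℝ) (p b / 4) from
        ⟨le_refl (0:ℝ), by linarith⟩)] with t h1 h2
    exact ⟨h1, h2⟩
  obtain ⟨t, hφt, ht0, ht4⟩ := hEv.exists
  have hlamφt : Q b - Q a + lam * C + 1 < lam * φ t := by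
    rw [div_lt_iff₀ hlam] at hφt; linarith
  -- slope bound: f (p b) - f (p b - t) ≤ C * t
  have h14 : (0:ℝ) < p b / 4 := by linarith
  have hm1 : p b / 4 ∈ Set.Ioc (0:ℝ) 1 := ⟨h14, by linarith⟩
  have hm3 : p b - t ∈ Set.Ioc (0:ℝ) 1 := ⟨by linarith, by linarith⟩
  have hm4 : p b ∈ Set.Ioc (0:ℝ) 1 := ⟨hpb, hpb1⟩
  have hs1 := hconc.slope_anti_adjacent hm1 hm3 (by linarith : p b / 4 < p b / 2)
    (by linarith : p b / 2 < p b - t)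
  have hs2 := hconc.slope_anti_adjacent (Set.mem_Ioc.2 ⟨by linarith, by linarith⟩) hm4
    (by linarith : p b / 2 < p b - t) (by linarith : p b - t < p b)
  have hslope : (f (p b) - f (p b - t)) / t ≤ C := by
    have e1 : p b - (p b - t) = t := by ring
    have e2 : p b / 2 - p b / 4 = p b / 4 := by ring
    rw [e1] at hs2
    rw [e2] at hs1
    exact le_trans (le_trans hs2 hs1) (le_refl C)
  have hCt : f (p b) - f (p b - t) ≤ C * t := by
    rw [div_le_iff₀ ht0] at hslope
    linarith [hslope]
  -- candidate distribution
  set q : A → ℝ := fun c => if c = a then t else if c = b then p b - t else p c with hq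
  have hqa : q a = t := by simp [hq]
  have hqb : q b = p b - t := by simp [hq, Ne.symm hab]
  have hqc : ∀ c, c ≠ a → c ≠ b → q c = p c := by
    intro c h1 h2; simp [hq, h1, h2]
  have hq0 : ∀ c, 0 ≤ q c := by
    intro c
    by_cases h1 : c = a
    · rw [h1, hqa]; exact ht0.le
    by_cases h2 : c = b
    · rw [h2, hqb]; linarith
    · rw [hqc c h1 h2]; exact hp0 c
  have hq1 : ∑ c, q c = 1 := by
    have key : ∀ c, q c = p c + (if c = a then t - p a else 0) + (if c = b then -t else 0) := by
      intro c
      by_cases h1 : c = a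
      · subst h1; rw [hqa, hpa]; simp [hab]
      by_cases h2 : c = b
      · subst h2; rw [hqb]
        rw [if_neg (Ne.symm hab), if_pos rfl]
        ring
      · rw [hqc c h1 h2]; simp [h1, h2]
    simp only [key, Finset.sum_add_distrib, Finset.sum_ite_eq', Finset.mem_univ, if_true, hp1, hpa]
    ring
  -- compute objective difference
  have hsum := hmax q hq0 hq1
  set G : A → ℝ → ℝ := fun c x => x * Q c + lam * (x * φ x) with hG
  have hdiff_sum : ∑ c, (G c (q c) - G c (p c)) ≤ 0 := by
    have : ∑ c, (G c (q c) - G c (p c)) = (∑ c, G c (q c)) - ∑ c, G c (p c) := by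
      rw [Finset.sum_sub_distrib]
    rw [this]
    simp only [hG]
    linarith [hsum]
  have hsplit : ∑ c, (G c (q c) - G c (p c)) = (G a (q a) - G a (p a)) + (G b (q b) - G b (p b)) := by
    have h0 : ∑ c ∈ ({a, b} : Finset A), (G c (q c) - G c (p c)) =
        ∑ c, (G c (q c) - G c (p c)) := by
      apply Finset.sum_subset (Finset.subset_univ _)
      intro c _ hc
      simp only [Finset.mem_insert, Finset.mem_singleton] at hc
      push_neg at hc
      rw [hqc c hc.1 hc.2, sub_self]
    rw [← h0, Finset.sum_pair hab]
  -- positivity of the gain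
  have hga : G a (q a) - G a (p a) = t * Q a + lam * (t * φ t) := by
    rw [hqa, hpa]; simp [hG]
  have hgb : G b (q b) - G b (p b) = -t * Q b + lam * (f (p b - t) - f (p b)) := by
    rw [hqb]; simp only [hG, hf]; ring
  have hgain : 0 < (G a (q a) - G a (p a)) + (G b (q b) - G b (p b)) := by
    rw [hga, hgb]
    have h1 : lam * (f (p b - t) - f (p b)) ≥ lam * (-(C * t)) := by
      apply mul_le_mul_of_nonneg_left _ hlam.le
      linarith
    have h2 : t * (lam * φ t) > t * (Q b - Q a + lam * C + 1) :=
      (mul_lt_mul_iff_right₀ ht0).2 hlamφt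
    nlinarith
  rw [hsplit] at hdiff_sum
  linarith
end

section
/- Let A be a nonempty finite set, let φ be a regularizer satisfying Assumption 2, let λ > 0, and let Q : A → ℝ. A probability vector p ∈ Δ_A maximizes the per-state regularized objective F_λ(p) = ∑_a (p a · Q a + λ·f_φ(p a)) over Δ_A if and only if there exists μ ∈ ℝ such that for every a ∈ A: (i) if p a > 0 then Q a + λ·f'_φ(p a) = μ, and (ii) if p a = 0 then Q a + λ·f'_φ(x) ≤ μ for every x ∈ (0,1), where f'_φ(x) = φ(x) + x·φ'(x). -/
/-!
Write `f(x) = x·φ(x)`. It is concave on `(0,1]` with derivative `f'_φ`, and `f'_φ ≤ φ` because `φ`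
is nonincreasing; since `f(0) = 0`, every tangent line of `f` at a point of `(0,1]` lies above `f`
on all of `[0,1]`.

Sufficiency: summing the tangent inequalities at the coordinates of `p`, all with slope `μ`, bounds
`F_λ(q)` by `F_λ(p) + μ(∑ q - ∑ p) = F_λ(p)`. Where `p a = 0` there is no tangent at `0`; one uses
the tangents at `t → 0⁺` instead, whose slopes are at most `(μ - Q a)/λ` by (ii) and whose values
`f(t)` tend to `0` by Assumption 2.

Necessity: moving mass `t` from a coordinate `b` with `p b > 0` to a coordinate `a` cannot increase
`F_λ`. Dividing by `t` and letting `t → 0⁺` compares one-sided difference quotients of `f`, giving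
`Q a + λ f'_φ(p a) ≤ Q b + λ f'_φ(p b)`; when `p a = 0` the quotient at `a` is
`φ(t) ≥ f'_φ(t) ≥ f'_φ(x)` for `t ≤ x`.
-/

open Filter

open Topology Set

theorem ConcaveOn.le_add_mul_sub_of_hasDerivWithinAt {S : Set ℝ} {f : ℝ → ℝ} {f' x y : ℝ}
    (hf : ConcaveOn ℝ S f) (hx : x ∈ S) (hy : y ∈ S) (hf' : HasDerivWithinAt f f' S x) :
    f y ≤ f x + f' * (y - x) := by
  rcases lt_trichotomy y x with hyx | rfl | hxy
  · have h := hf.le_slope_of_hasDerivWithinAt hy hx hyx hf'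
    rw [slope_def_field, le_div_iff₀ (sub_pos.2 hyx)] at h
    linarith
  · simp
  · have h := hf.slope_le_of_hasDerivWithinAt hx hy hxy hf'
    rw [slope_def_field, div_le_iff₀ (sub_pos.2 hxy)] at h
    linarith

theorem HasDerivWithinAt.tendsto_sub_div_right {f : ℝ → ℝ} {f' x : ℝ} {s : Set ℝ}
    (hf : HasDerivWithinAt f f' s x) (hs : s ∈ 𝓝[>] x) :
    Tendsto (fun t => (f (x + t) - f x) / t) (𝓝[>] 0) (𝓝 f') := by
  have hslope := (hasDerivWithinAt_iff_tendsto_slope' self_notMem_Ioi).mp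
    (hf.mono_of_mem_nhdsWithin hs)
  have hshift : Tendsto (x + ·) (𝓝[>] 0) (𝓝[>] x) :=
    tendsto_nhdsWithin_iff.2 ⟨((continuous_const_add x).tendsto' 0 x (add_zero x)).mono_left
      nhdsWithin_le_nhds, eventually_mem_nhdsWithin.mono fun t ht => lt_add_of_pos_right x ht⟩
  refine (hslope.comp hshift).congr fun t => ?_
  simp [slope_def_field]

theorem HasDerivWithinAt.tendsto_sub_div_left {f : ℝ → ℝ} {f' x : ℝ} {s : Set ℝ}
    (hf : HasDerivWithinAt f f' s x) (hs : s ∈ 𝓝[<] x) :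
    Tendsto (fun t => (f x - f (x - t)) / t) (𝓝[>] 0) (𝓝 f') := by
  have hslope := (hasDerivWithinAt_iff_tendsto_slope' self_notMem_Iio).mp
    (hf.mono_of_mem_nhdsWithin hs)
  have hshift : Tendsto (x - ·) (𝓝[>] 0) (𝓝[<] x) :=
    tendsto_nhdsWithin_iff.2 ⟨((continuous_sub_left x).tendsto' 0 x (sub_zero x)).mono_left
      nhdsWithin_le_nhds, eventually_mem_nhdsWithin.mono fun t ht => sub_lt_self x ht⟩
  refine (hslope.comp hshift).congr fun t => ?_
  simp only [Function.comp_apply, slope_def_field]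
  rw [show x - t - x = -t by ring, div_neg, ← neg_div, neg_sub]

namespace IsRegularizer

variable {φ : ℝ → ℝ}

theorem hasDerivWithinAt_id_mul (hφ : IsRegularizer φ) {x : ℝ} (hx : x ∈ Ioc 0 1) :
    HasDerivWithinAt (fun y => y * φ y) (fderivPhi φ x) (Ioc 0 1) x := by
  simpa [fderivPhi] using (hasDerivWithinAt_id x _).fun_mul (hφ.2.2.1 x hx).hasDerivWithinAt

theorem fderivPhi_le (hφ : IsRegularizer φ) {x : ℝ} (hx : 0 ≤ x) : fderivPhi φ x ≤ φ x :=
  add_le_of_nonpos_right (mul_nonpos_of_nonneg_of_nonpos hx hφ.1.derivWithin_nonpos)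

theorem id_mul_le_tangent (hφ : IsRegularizer φ) {x y : ℝ} (hx : x ∈ Ioc 0 1)
    (hy : y ∈ Icc 0 1) : y * φ y ≤ x * φ x + fderivPhi φ x * (y - x) := by
  rcases hy.1.eq_or_lt with rfl | hy0
  · nlinarith [hφ.fderivPhi_le hx.1.le, hx.1]
  · exact hφ.2.2.2.concaveOn.le_add_mul_sub_of_hasDerivWithinAt hx ⟨hy0, hy.2⟩
      (hφ.hasDerivWithinAt_id_mul hx)

theorem fderivPhi_le_fderivPhi_of_le (hφ : IsRegularizer φ) {x y : ℝ} (hx : 0 < x) (hy : y ≤ 1)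
    (hxy : x ≤ y) : fderivPhi φ y ≤ fderivPhi φ x := by
  rcases hxy.eq_or_lt with rfl | hxy
  · rfl
  have hxS : x ∈ Ioc 0 1 := ⟨hx, hxy.le.trans hy⟩
  have hyS : y ∈ Ioc 0 1 := ⟨hx.trans hxy, hy⟩
  exact (hφ.2.2.2.concaveOn.le_slope_of_hasDerivWithinAt hxS hyS hxy
    (hφ.hasDerivWithinAt_id_mul hyS)).trans
    (hφ.2.2.2.concaveOn.slope_le_of_hasDerivWithinAt hxS hyS hxy
    (hφ.hasDerivWithinAt_id_mul hxS))

theorem tendsto_diffQuot_right (hφ : IsRegularizer φ) {x : ℝ} (hx : x ∈ Ioo 0 1) :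
    Tendsto (fun t => ((x + t) * φ (x + t) - x * φ x) / t) (𝓝[>] 0) (𝓝 (fderivPhi φ x)) :=
  (hφ.hasDerivWithinAt_id_mul ⟨hx.1, hx.2.le⟩).tendsto_sub_div_right
    (Ioc_mem_nhdsGT_of_mem ⟨hx.1.le, hx.2⟩)

theorem tendsto_diffQuot_left (hφ : IsRegularizer φ) {x : ℝ} (hx : x ∈ Ioc 0 1) :
    Tendsto (fun t => (x * φ x - (x - t) * φ (x - t)) / t) (𝓝[>] 0) (𝓝 (fderivPhi φ x)) :=
  (hφ.hasDerivWithinAt_id_mul hx).tendsto_sub_div_left (Ioc_mem_nhdsLT_of_mem hx)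

end IsRegularizer

section Simplex

variable {A : Type*} [Fintype A]

theorem le_one_of_mem_stdSimplex {p : A → ℝ} (hp : p ∈ stdSimplex ℝ A) (a : A) : p a ≤ 1 :=
  hp.2 ▸ Finset.single_le_sum (fun b _ => hp.1 b) (Finset.mem_univ a)

theorem add_le_one_of_mem_stdSimplex {p : A → ℝ} (hp : p ∈ stdSimplex ℝ A) {a b : A}
    (hab : a ≠ b) : p a + p b ≤ 1 := by
  classical
  rw [← Finset.sum_pair hab, ← hp.2]
  exact Finset.sum_le_sum_of_subset_of_nonneg (Finset.subset_univ _) fun c _ _ => hp.1 c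

variable [DecidableEq A]

def transferMass (p : A → ℝ) (a b : A) (t : ℝ) : A → ℝ :=
  Function.update (Function.update p a (p a + t)) b (p b - t)

theorem sum_transferMass (g : A → ℝ → ℝ) (p : A → ℝ) {a b : A} (hab : a ≠ b) (t : ℝ) :
    ∑ c, g c (transferMass p a b t c) =
      ∑ c, g c (p c) + (g a (p a + t) - g a (p a)) + (g b (p b - t) - g b (p b)) := by
  have h : ∑ c, (g c (transferMass p a b t c) - g c (p c)) =
      (g a (p a + t) - g a (p a)) + (g b (p b - t) - g b (p b)) := by
    rw [Fintype.sum_eq_add a b hab fun c hc => by simp [transferMass, hc.1, hc.2]]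
    simp [transferMass, hab]
  rw [Finset.sum_sub_distrib] at h
  linarith

theorem transferMass_mem_stdSimplex {p : A → ℝ} (hp : p ∈ stdSimplex ℝ A) {a b : A}
    (hab : a ≠ b) {t : ℝ} (hta : 0 ≤ p a + t) (htb : 0 ≤ p b - t) :
    transferMass p a b t ∈ stdSimplex ℝ A := by
  refine ⟨fun c => ?_, ?_⟩
  · unfold transferMass
    rcases eq_or_ne c b with rfl | hcb
    · simpa using htb
    rcases eq_or_ne c a with rfl | hca
    · simpa [hcb] using hta
    · simpa [hcb, hca] using hp.1 c
  · simpa [hp.2] using sum_transferMass (fun _ y => y) p hab t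

end Simplex

section KKT

variable {A : Type*} [Fintype A] {φ : ℝ → ℝ} {lam : ℝ} {Q p : A → ℝ}

/-- The per-state regularized objective `F_λ`. -/
def regObjective (φ : ℝ → ℝ) (lam : ℝ) (Q p : A → ℝ) : ℝ :=
  ∑ a, (p a * Q a + lam * (p a * φ (p a)))

def IsKKTMultiplier (φ : ℝ → ℝ) (lam : ℝ) (Q p : A → ℝ) (μ : ℝ) : Prop :=
  ∀ a, (0 < p a → Q a + lam * fderivPhi φ (p a) = μ) ∧
    (p a = 0 → ∀ x ∈ Ioo (0 : ℝ) 1, Q a + lam * fderivPhi φ x ≤ μ)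


theorem transfer_le_of_isMaxOn (hmax : IsMaxOn (regObjective φ lam Q) (stdSimplex ℝ A) p)
    (hp : p ∈ stdSimplex ℝ A) {a b : A} (hab : a ≠ b) {t : ℝ} (hta : 0 ≤ p a + t)
    (htb : 0 ≤ p b - t) :
    t * Q a + lam * ((p a + t) * φ (p a + t) - p a * φ (p a)) ≤
      t * Q b + lam * (p b * φ (p b) - (p b - t) * φ (p b - t)) := by
  classical
  have h := isMaxOn_iff.1 hmax _ (transferMass_mem_stdSimplex hp hab hta htb)
  unfold regObjective at h
  rw [sum_transferMass (fun c y => y * Q c + lam * (y * φ y)) p hab t] at h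
  linarith

theorem eventually_diffQuot_le_of_isMaxOn
    (hmax : IsMaxOn (regObjective φ lam Q) (stdSimplex ℝ A) p) (hp : p ∈ stdSimplex ℝ A)
    {a b : A} (hab : a ≠ b) (hpb : 0 < p b) :
    ∀ᶠ t in 𝓝[>] 0, Q a + lam * (((p a + t) * φ (p a + t) - p a * φ (p a)) / t) ≤
      Q b + lam * ((p b * φ (p b) - (p b - t) * φ (p b - t)) / t) := by
  filter_upwards [Ioc_mem_nhdsGT hpb] with t ht
  have h := transfer_le_of_isMaxOn hmax hp hab (by linarith [hp.1 a, ht.1]) (sub_nonneg.2 ht.2)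
  have h' := div_le_div_of_nonneg_right h ht.1.le
  rwa [add_div, add_div, mul_div_cancel_left₀ _ ht.1.ne', mul_div_cancel_left₀ _ ht.1.ne',
    mul_div_assoc, mul_div_assoc] at h'

theorem add_mul_fderivPhi_le_of_isMaxOn_of_pos (hφ : IsRegularizer φ)
    (hmax : IsMaxOn (regObjective φ lam Q) (stdSimplex ℝ A) p)
    (hp : p ∈ stdSimplex ℝ A) {a b : A} (hab : a ≠ b) (hpa : 0 < p a) (hpb : 0 < p b) :
    Q a + lam * fderivPhi φ (p a) ≤ Q b + lam * fderivPhi φ (p b) := by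
  have hpa1 : p a < 1 := by linarith [add_le_one_of_mem_stdSimplex hp hab]
  have hright := hφ.tendsto_diffQuot_right ⟨hpa, hpa1⟩
  have hleft := hφ.tendsto_diffQuot_left ⟨hpb, le_one_of_mem_stdSimplex hp b⟩
  exact le_of_tendsto_of_tendsto (tendsto_const_nhds.add (hright.const_mul lam))
    (tendsto_const_nhds.add (hleft.const_mul lam))
    (eventually_diffQuot_le_of_isMaxOn hmax hp hab hpb)

theorem add_mul_fderivPhi_le_of_isMaxOn_of_eq_zero (hφ : IsRegularizer φ) (hlam : 0 ≤ lam)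
    (hmax : IsMaxOn (regObjective φ lam Q) (stdSimplex ℝ A) p)
    (hp : p ∈ stdSimplex ℝ A) {a b : A} (hab : a ≠ b)
    (hpa : p a = 0) (hpb : 0 < p b) {x : ℝ} (hx : x ∈ Ioo (0 : ℝ) 1) :
    Q a + lam * fderivPhi φ x ≤ Q b + lam * fderivPhi φ (p b) := by
  have hleft := hφ.tendsto_diffQuot_left ⟨hpb, le_one_of_mem_stdSimplex hp b⟩
  refine ge_of_tendsto (tendsto_const_nhds.add (hleft.const_mul lam)) ?_
  filter_upwards [eventually_diffQuot_le_of_isMaxOn hmax hp hab hpb, Ioo_mem_nhdsGT hx.1]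
    with t hquot ht
  calc Q a + lam * fderivPhi φ x ≤ Q a + lam * fderivPhi φ t := by
        gcongr; exact hφ.fderivPhi_le_fderivPhi_of_le ht.1 hx.2.le ht.2.le
    _ ≤ Q a + lam * φ t := by gcongr; exact hφ.fderivPhi_le ht.1.le
    _ = Q a + lam * (((p a + t) * φ (p a + t) - p a * φ (p a)) / t) := by
        rw [hpa, zero_add, zero_mul, sub_zero, mul_div_cancel_left₀ _ ht.1.ne']
    _ ≤ _ := hquot

theorem kkt_of_isMaxOn (hφ : IsRegularizer φ) (hlam : 0 ≤ lam)
    (hmax : IsMaxOn (regObjective φ lam Q) (stdSimplex ℝ A) p) (hp : p ∈ stdSimplex ℝ A) :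
    ∃ μ, IsKKTMultiplier φ lam Q p μ := by
  classical
  obtain ⟨b, -, hpb⟩ : ∃ b ∈ Finset.univ, (0 : A → ℝ) b < p b :=
    Finset.exists_lt_of_sum_lt (by simp [hp.2])
  refine ⟨Q b + lam * fderivPhi φ (p b), fun a => ⟨fun hpa => ?_, fun hpa x hx => ?_⟩⟩
  · rcases eq_or_ne a b with rfl | hab
    · rfl
    exact le_antisymm (add_mul_fderivPhi_le_of_isMaxOn_of_pos hφ hmax hp hab hpa hpb)
      (add_mul_fderivPhi_le_of_isMaxOn_of_pos hφ hmax hp hab.symm hpb hpa)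
  · have hab : a ≠ b := by rintro rfl; exact hpb.ne' hpa
    exact add_mul_fderivPhi_le_of_isMaxOn_of_eq_zero hφ hlam hmax hp hab hpa hpb hx

theorem mul_add_le_mul_of_forall_fderivPhi_le (hφ : IsRegularizer φ) (hA2 : Assumption2 φ)
    (hlam : 0 ≤ lam) {c μ q : ℝ} (hq : q ∈ Icc (0 : ℝ) 1)
    (hμ : ∀ x ∈ Ioo (0 : ℝ) 1, c + lam * fderivPhi φ x ≤ μ) :
    q * c + lam * (q * φ q) ≤ μ * q := by
  rcases hq.1.eq_or_lt with rfl | hq0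
  · simp
  have hlim : Tendsto (fun t => q * c + lam * (t * φ t) + (μ - c) * (q - t)) (𝓝[>] 0)
      (𝓝 (q * c + lam * 0 + (μ - c) * (q - 0))) :=
    (tendsto_const_nhds.add (hA2.const_mul lam)).add
      ((tendsto_const_nhds.sub (tendsto_id.mono_left nhdsWithin_le_nhds)).const_mul _)
  refine le_of_le_of_eq (ge_of_tendsto hlim ?_) (by ring)
  filter_upwards [Ioo_mem_nhdsGT hq0] with t ht
  have htangent := hφ.id_mul_le_tangent ⟨ht.1, ht.2.le.trans hq.2⟩ hq
  have hslope := hμ t ⟨ht.1, ht.2.trans_le hq.2⟩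
  nlinarith [mul_le_mul_of_nonneg_left htangent hlam, mul_le_mul_of_nonneg_right hslope
    (sub_nonneg.2 ht.2.le)]

theorem mul_add_le_tangent_of_kkt (hφ : IsRegularizer φ) (hA2 : Assumption2 φ) (hlam : 0 ≤ lam)
    {c μ p q : ℝ} (hp : p ∈ Icc (0 : ℝ) 1) (hq : q ∈ Icc (0 : ℝ) 1)
    (hpos : 0 < p → c + lam * fderivPhi φ p = μ)
    (hzero : p = 0 → ∀ x ∈ Ioo (0 : ℝ) 1, c + lam * fderivPhi φ x ≤ μ) :
    q * c + lam * (q * φ q) ≤ p * c + lam * (p * φ p) + μ * (q - p) := by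
  rcases hp.1.eq_or_lt with rfl | hp0
  · simpa using mul_add_le_mul_of_forall_fderivPhi_le hφ hA2 hlam hq (hzero rfl)
  · rw [← hpos hp0]
    nlinarith [mul_le_mul_of_nonneg_left (hφ.id_mul_le_tangent ⟨hp0, hp.2⟩ hq) hlam]

theorem isMaxOn_of_kkt (hφ : IsRegularizer φ) (hA2 : Assumption2 φ) (hlam : 0 ≤ lam) {μ : ℝ}
    (hμ : IsKKTMultiplier φ lam Q p μ) (hp : p ∈ stdSimplex ℝ A) :
    IsMaxOn (regObjective φ lam Q) (stdSimplex ℝ A) p := by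
  refine isMaxOn_iff.2 fun q hq => ?_
  have hcoord (a : A) := mul_add_le_tangent_of_kkt hφ hA2 hlam (c := Q a)
    ⟨hp.1 a, le_one_of_mem_stdSimplex hp a⟩ ⟨hq.1 a, le_one_of_mem_stdSimplex hq a⟩
    (hμ a).1 (hμ a).2
  calc regObjective φ lam Q q
      ≤ ∑ a, (p a * Q a + lam * (p a * φ (p a)) + μ * (q a - p a)) :=
        Finset.sum_le_sum fun a _ => hcoord a
    _ = regObjective φ lam Q p + μ * (∑ a, q a - ∑ a, p a) := by
        rw [Finset.sum_add_distrib, ← Finset.mul_sum, Finset.sum_sub_distrib, regObjective]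
    _ = regObjective φ lam Q p := by rw [hq.2, hp.2, sub_self, mul_zero, add_zero]

end KKT

theorem maximizer_iff_kkt_general (A : Type*) [Fintype A]
    (φ : ℝ → ℝ) (hφ : IsRegularizer φ) (hA2 : Assumption2 φ)
    (lam : ℝ) (hlam : 0 < lam) (Q : A → ℝ)
    (p : A → ℝ) (hp0 : ∀ a, 0 ≤ p a) (hp1 : ∑ a, p a = 1) :
    (∀ q : A → ℝ, (∀ a, 0 ≤ q a) → (∑ a, q a = 1) →
        (∑ a, (q a * Q a + lam * (q a * φ (q a)))) ≤
          ∑ a, (p a * Q a + lam * (p a * φ (p a)))) ↔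
      ∃ μ : ℝ, ∀ a,
        (0 < p a → Q a + lam * fderivPhi φ (p a) = μ) ∧
        (p a = 0 → ∀ x ∈ Set.Ioo (0 : ℝ) 1, Q a + lam * fderivPhi φ x ≤ μ) := by
  have hp : p ∈ stdSimplex ℝ A := ⟨hp0, hp1⟩
  constructor
  · intro hmax
    exact kkt_of_isMaxOn hφ hlam.le (isMaxOn_iff.2 fun q hq => hmax q hq.1 hq.2) hp
  · rintro ⟨μ, hμ⟩ q hq0 hq1
    exact isMaxOn_iff.1 (isMaxOn_of_kkt hφ hA2 hlam.le hμ hp) q ⟨hq0, hq1⟩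

/-- KKT characterization of maximizers of the per-state regularized objective
`F_λ(p) = ∑ a, (p a · Q a + λ·f_φ(p a))` over the simplex: `p` is a maximizer iff
there is `μ ∈ ℝ` with `Q a + λ·f'_φ(p a) = μ` whenever `p a > 0`, and
`Q a + λ·f'_φ(x) ≤ μ` for all `x ∈ (0,1)` whenever `p a = 0`. -/
theorem maximizer_iff_kkt (A : Type*) [Fintype A] [Nonempty A]
    (φ : ℝ → ℝ) (hφ : IsRegularizer φ) (hA2 : Assumption2 φ)
    (lam : ℝ) (hlam : 0 < lam) (Q : A → ℝ)
    (p : A → ℝ) (hp0 : ∀ a, 0 ≤ p a) (hp1 : ∑ a, p a = 1) :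
    (∀ q : A → ℝ, (∀ a, 0 ≤ q a) → (∑ a, q a = 1) →
        (∑ a, (q a * Q a + lam * (q a * φ (q a)))) ≤
          ∑ a, (p a * Q a + lam * (p a * φ (p a)))) ↔
      ∃ μ : ℝ, ∀ a,
        (0 < p a → Q a + lam * fderivPhi φ (p a) = μ) ∧
        (p a = 0 → ∀ x ∈ Set.Ioo (0 : ℝ) 1, Q a + lam * fderivPhi φ x ≤ μ) :=
  maximizer_iff_kkt_general A φ hφ hA2 lam hlam Q p hp0 hp1
end

section
/- Let A be a nonempty finite set with n = |A| elements, let φ be a regularizer satisfying Assumption 2, and let Q : A → ℝ. Then the maximizers of the per-state regularized objective converge to the uniform distribution as the regularization coefficient tends to infinity: for every ε > 0 there exists Λ > 0 such that for every λ ≥ Λ, every maximizer p ∈ Δ_A of F_λ(p) = ∑_a (p a · Q a + λ·f_φ(p a)) satisfies |p a − 1/n| ≤ ε for all a ∈ A. -/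
open Filter

/-!
Write `f(x) = x φ(x)` and `G(p) = ∑ₐ f(pₐ)`. Since `φ` is antitone, `f(s y) ≥ s f(y)` for
`s, y ∈ [0,1]`, so `f` stays concave on `[0,1]`, and it is strictly concave on `(0,1]`; by strict
Jensen, `G` on the simplex is largest exactly at the uniform distribution `u`. On the compact set
of distributions bounded away from the boundary and at distance `≥ r` from `u`, `f` is
continuous, so `G(u) - G` has a positive lower bound there. A distribution `p` far from `u` has its
midpoint with `u` in such a set, and concavity of `G` transfers the gap to `p`. Since the linear
part `∑ₐ pₐ Qₐ` varies by at most `2 ∑ₐ |Qₐ|`, a maximizer for large `λ` must be close to `u`.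
-/

open Finset

section Regularizer

variable {φ : ℝ → ℝ}

theorem mul_mul_le_mul_mul_of_antitoneOn (hφ : AntitoneOn φ (Set.Ioc 0 1)) {s y : ℝ}
    (hs : s ∈ Set.Icc (0 : ℝ) 1) (hy : y ∈ Set.Icc (0 : ℝ) 1) :
    s * (y * φ y) ≤ s * y * φ (s * y) := by
  rcases (mul_nonneg hs.1 hy.1).eq_or_lt with hsy | hsy
  · rcases mul_eq_zero.mp hsy.symm with h | h <;> simp [h]
  have hsy_le : s * y ≤ y := mul_le_of_le_one_left hy.1 hs.2
  have hφ_le : φ y ≤ φ (s * y) :=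
    hφ ⟨hsy, hsy_le.trans hy.2⟩ ⟨pos_of_mul_pos_right hsy hs.1, hy.2⟩ hsy_le
  calc s * (y * φ y) = s * y * φ y := by ring
    _ ≤ s * y * φ (s * y) := mul_le_mul_of_nonneg_left hφ_le hsy.le

theorem concaveOn_Icc_of_antitoneOn (hφ : AntitoneOn φ (Set.Ioc 0 1))
    (hf : ConcaveOn ℝ (Set.Ioc 0 1) (fun x => x * φ x)) :
    ConcaveOn ℝ (Set.Icc 0 1) (fun x => x * φ x) := by
  refine ⟨convex_Icc 0 1, fun x hx y hy a b ha hb hab => ?_⟩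
  simp only [smul_eq_mul]
  rcases hx.1.eq_or_lt with rfl | hx0
  · simpa using mul_mul_le_mul_mul_of_antitoneOn hφ ⟨hb, by linarith⟩ hy
  rcases hy.1.eq_or_lt with rfl | hy0
  · simpa using mul_mul_le_mul_mul_of_antitoneOn hφ ⟨ha, by linarith⟩ hx
  simpa using hf.2 ⟨hx0, hx.2⟩ ⟨hy0, hy.2⟩ ha hb hab

end Regularizer

section Simplex

variable {A : Type*} [Fintype A] {φ : ℝ → ℝ}

def regSum (φ : ℝ → ℝ) (p : A → ℝ) : ℝ := ∑ a, p a * φ (p a)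

variable (A) in
noncomputable def uniformDist : A → ℝ := fun _ => (Fintype.card A : ℝ)⁻¹

theorem abs_sum_mul_le_sum_abs_of_mem_stdSimplex {p : A → ℝ} (hp : p ∈ stdSimplex ℝ A)
    (Q : A → ℝ) : |∑ a, p a * Q a| ≤ ∑ a, |Q a| := by
  refine (abs_sum_le_sum_abs _ _).trans (sum_le_sum fun a _ => ?_)
  rw [abs_mul, abs_of_nonneg (hp.1 a)]
  exact mul_le_of_le_one_left (abs_nonneg _) (mem_Icc_of_mem_stdSimplex hp a).2

variable [Nonempty A]

theorem uniformDist_mem_stdSimplex : uniformDist A ∈ stdSimplex ℝ A :=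
  (stdSimplex.barycenter : stdSimplex ℝ A).2

theorem regSum_lt_regSum_uniformDist (hf : StrictConcaveOn ℝ (Set.Ioc 0 1) (fun x => x * φ x))
    {q : A → ℝ} (hq : q ∈ stdSimplex ℝ A) (hq_pos : ∀ a, 0 < q a)
    (hq_ne : ∃ a, q a ≠ (Fintype.card A : ℝ)⁻¹) :
    regSum φ q < regSum φ (uniformDist A) := by
  set n : ℝ := (Fintype.card A : ℝ)
  have hn : 0 < n := by positivity
  have hmean : ∑ a, n⁻¹ • q a = n⁻¹ := by simp only [smul_eq_mul, ← mul_sum, hq.2, mul_one]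
  have hJensen := (hf.lt_map_sum_iff_of_pos' (t := univ) (w := fun _ => n⁻¹)
    (fun _ _ => inv_pos.2 hn) (by simp [n])
    fun a _ => ⟨hq_pos a, (mem_Icc_of_mem_stdSimplex hq a).2⟩).2
    (by simpa only [hmean, mem_univ, true_and] using hq_ne)
  rw [hmean] at hJensen
  simp only [smul_eq_mul, ← mul_sum] at hJensen
  have hbar : regSum φ (uniformDist A) = n * (n⁻¹ * φ n⁻¹) := by
    simp [regSum, uniformDist, n]
  rw [hbar]
  calc regSum φ q = n * (n⁻¹ * regSum φ q) := by field_simp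
    _ < n * (n⁻¹ * φ n⁻¹) := mul_lt_mul_of_pos_left hJensen hn

theorem exists_regSum_add_le_of_ge_of_far
    (hcont : ContinuousOn (fun x => x * φ x) (Set.Ioc 0 1))
    (hf : StrictConcaveOn ℝ (Set.Ioc 0 1) (fun x => x * φ x)) {c r : ℝ} (hc : 0 < c) (hr : 0 < r) :
    ∃ δ > 0, ∀ q ∈ stdSimplex ℝ A, (∀ a, c ≤ q a) → (∃ a, r ≤ |q a - (Fintype.card A : ℝ)⁻¹|) →
      regSum φ q + δ ≤ regSum φ (uniformDist A) := by
  set K := stdSimplex ℝ A ∩ ({q | ∀ a, c ≤ q a} ∩ {q | ∃ a, r ≤ |q a - (Fintype.card A : ℝ)⁻¹|})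
  have hK_closed : IsClosed ({q : A → ℝ | ∀ a, c ≤ q a} ∩
      {q | ∃ a, r ≤ |q a - (Fintype.card A : ℝ)⁻¹|}) := by
    refine IsClosed.inter ?_ ?_
    · simp only [Set.ofPred_forall]
      exact isClosed_iInter fun a => isClosed_le continuous_const (continuous_apply a)
    · simp only [Set.ofPred_exists]
      exact isClosed_iUnion_of_finite fun a =>
        isClosed_le continuous_const ((continuous_apply a).sub continuous_const).abs
  have hK_mem {q} (hq : q ∈ K) (a : A) : q a ∈ Set.Ioc 0 1 :=
    ⟨hc.trans_le (hq.2.1 a), (mem_Icc_of_mem_stdSimplex hq.1 a).2⟩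
  have hcontK : ContinuousOn (fun q => regSum φ (uniformDist A) - regSum φ q) K :=
    continuousOn_const.sub <| continuousOn_finsetSum _ fun a _ =>
      hcont.comp (continuous_apply a).continuousOn fun q hq => hK_mem hq a
  have hlt : ∀ q ∈ K, 0 < regSum φ (uniformDist A) - regSum φ q := by
    rintro q hq
    obtain ⟨a, ha⟩ := hq.2.2
    refine sub_pos.2 <| regSum_lt_regSum_uniformDist hf hq.1 (fun b => (hK_mem hq b).1) ⟨a, ?_⟩
    rintro h
    rw [h, sub_self, abs_zero] at ha
    linarith
  obtain ⟨δ, hδ, hle⟩ :=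
    ((isCompact_stdSimplex ℝ A).inter_right hK_closed).exists_forall_le' hcontK hlt
  exact ⟨δ, hδ, fun q hq hqc hqr => by linarith [hle q ⟨hq, hqc, hqr⟩]⟩

theorem exists_regSum_add_le_of_far (hφ : IsRegularizer φ) {ε : ℝ} (hε : 0 < ε) :
    ∃ δ > 0, ∀ p ∈ stdSimplex ℝ A, (∃ a, ε ≤ |p a - (Fintype.card A : ℝ)⁻¹|) →
      regSum φ p + δ ≤ regSum φ (uniformDist A) := by
  set n : ℝ := (Fintype.card A : ℝ)
  have hcont : ContinuousOn (fun x => x * φ x) (Set.Ioc 0 1) :=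
    continuousOn_id.mul hφ.2.2.1.continuousOn
  obtain ⟨δ, hδ, hgap⟩ := exists_regSum_add_le_of_ge_of_far (A := A) hcont hφ.2.2.2
    (c := 2⁻¹ * n⁻¹) (r := 2⁻¹ * ε) (by positivity) (by positivity)
  refine ⟨2 * δ, by positivity, fun p hp ⟨a, ha⟩ => ?_⟩
  set q : A → ℝ := (2⁻¹ : ℝ) • uniformDist A + (2⁻¹ : ℝ) • p
  have hq_apply (b : A) : q b = 2⁻¹ * n⁻¹ + 2⁻¹ * p b := rfl
  have hq : q ∈ stdSimplex ℝ A :=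
    convex_stdSimplex ℝ A uniformDist_mem_stdSimplex hp (by norm_num) (by norm_num) (by norm_num)
  have hconc := concaveOn_Icc_of_antitoneOn hφ.1 hφ.2.2.2.concaveOn
  have hmid : 2⁻¹ * regSum φ (uniformDist A) + 2⁻¹ * regSum φ p ≤ regSum φ q := by
    simp only [regSum, mul_sum, ← sum_add_distrib]
    exact sum_le_sum fun b _ => hconc.2 (mem_Icc_of_mem_stdSimplex uniformDist_mem_stdSimplex b)
      (mem_Icc_of_mem_stdSimplex hp b) (by norm_num) (by norm_num) (by norm_num)
  have hqgap := hgap q hq (fun b => by rw [hq_apply]; linarith [hp.1 b])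
    ⟨a, by rw [hq_apply, show 2⁻¹ * n⁻¹ + 2⁻¹ * p a - n⁻¹ = 2⁻¹ * (p a - n⁻¹) by ring, abs_mul,
      abs_of_pos (by norm_num : (0 : ℝ) < 2⁻¹)]; gcongr⟩
  linarith

end Simplex

theorem maximizer_tendsto_uniform_general (A : Type*) [Fintype A] [Nonempty A]
    (φ : ℝ → ℝ) (hφ : IsRegularizer φ) (Q : A → ℝ) :
    ∀ ε > 0, ∃ Λ > 0, ∀ lam ≥ Λ, ∀ p : A → ℝ,
      (∀ a, 0 ≤ p a) → (∑ a, p a = 1) →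
      (∀ q : A → ℝ, (∀ a, 0 ≤ q a) → (∑ a, q a = 1) →
        (∑ a, (q a * Q a + lam * (q a * φ (q a)))) ≤
          ∑ a, (p a * Q a + lam * (p a * φ (p a)))) →
      ∀ a, |p a - 1 / (Fintype.card A : ℝ)| ≤ ε := by
  intro ε hε
  obtain ⟨δ, hδ, hgap⟩ := exists_regSum_add_le_of_far (A := A) hφ hε
  set S := ∑ a, |Q a|
  refine ⟨(2 * S + 1) / δ, by positivity, fun lam hlam p hp0 hp1 hmax a => ?_⟩
  have hp : p ∈ stdSimplex ℝ A := ⟨hp0, hp1⟩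
  have hu := uniformDist_mem_stdSimplex (A := A)
  have hobj (q : A → ℝ) : ∑ a, (q a * Q a + lam * (q a * φ (q a))) =
      ∑ a, q a * Q a + lam * regSum φ q := by
    rw [sum_add_distrib, regSum, mul_sum]
  have hopt := hmax _ hu.1 hu.2
  rw [hobj, hobj] at hopt
  have hlamδ : 2 * S + 1 ≤ lam * δ := (div_le_iff₀ hδ).1 hlam
  by_contra! hfar
  have hgap_p := hgap p hp ⟨a, by rw [← one_div]; exact hfar.le⟩
  have hQp : ∑ a, p a * Q a ≤ S := (abs_le.1 (abs_sum_mul_le_sum_abs_of_mem_stdSimplex hp Q)).2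
  have hQu : -S ≤ ∑ a, uniformDist A a * Q a :=
    (abs_le.1 (abs_sum_mul_le_sum_abs_of_mem_stdSimplex hu Q)).1
  have hlam0 : 0 < lam := (by positivity : 0 < (2 * S + 1) / δ).trans_le hlam
  nlinarith [mul_le_mul_of_nonneg_left hgap_p hlam0.le]

/-- As the regularization coefficient tends to infinity, maximizers of the
per-state regularized objective converge to the uniform distribution. -/
theorem maximizer_tendsto_uniform (A : Type*) [Fintype A] [Nonempty A]
    (φ : ℝ → ℝ) (hφ : IsRegularizer φ) (hA2 : Assumption2 φ) (Q : A → ℝ) :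
    ∀ ε > 0, ∃ Λ > 0, ∀ lam ≥ Λ, ∀ p : A → ℝ,
      (∀ a, 0 ≤ p a) → (∑ a, p a = 1) →
      (∀ q : A → ℝ, (∀ a, 0 ≤ q a) → (∑ a, q a = 1) →
        (∑ a, (q a * Q a + lam * (q a * φ (q a)))) ≤
          ∑ a, (p a * Q a + lam * (p a * φ (p a)))) →
      ∀ a, |p a - 1 / (Fintype.card A : ℝ)| ≤ ε :=
  maximizer_tendsto_uniform_general A φ hφ Q
end

section
/- Let A be a nonempty finite set, let φ be a regularizer satisfying Assumption 2, and let Q : A → ℝ have a unique maximizer a* ∈ A. Suppose f'_φ(x) = φ(x) + x·φ'(x) tends to a finite limit L as x → 0⁺. If λ > 0 satisfies λ·(L − f'_φ(1)) < Q a* − Q a for every a ≠ a*, then every maximizer p ∈ Δ_A of the per-state regularized objective F_λ(p) = ∑_a (p a · Q a + λ·f_φ(p a)) satisfies p a = 0 for all a ≠ a* and p a* = 1; i.e., for sufficiently small λ the regularized optimal policy concentrates on the greedy action. -/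
open Filter

/-!
Moving all the mass `t = p a` of an action `a ≠ a*` onto `a*` changes the objective by
`t (Q a* - Q a) + λ (f(s + t) - f(s) - f(t))` with `s = p a*` and `f(x) = x φ(x)`. By concavity
`f(s + t) - f(s) ≥ t f'(s + t) ≥ t f'(1)`, and letting `x → 0⁺` in `f(t) - f(x) ≤ f'(x) (t - x)`
gives `f(t) ≤ t L`. So the change is at least `t (Q a* - Q a - λ (L - f'(1))) > 0` whenever `t > 0`,
contradicting maximality.
-/

open Set Function Topology

theorem Fintype.sum_apply_update {ι γ β : Type*} [Fintype ι] [DecidableEq ι] [AddCommGroup β]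
    (g : ι → γ → β) (p : ι → γ) (i : ι) (x : γ) :
    ∑ b, g b (update p i x b) = ∑ b, g b (p b) + (g i x - g i (p i)) := by
  simp only [apply_update g, Finset.sum_update_of_mem (Finset.mem_univ i),
    Finset.sum_eq_add_sum_sdiff_singleton_of_mem (Finset.mem_univ i) (fun b => g b (p b))]
  abel

theorem Fintype.sum_apply_update_update {ι γ β : Type*} [Fintype ι] [DecidableEq ι]
    [AddCommGroup β] (g : ι → γ → β) (p : ι → γ) {i j : ι} (hij : i ≠ j) (x y : γ) :
    ∑ b, g b (update (update p i x) j y b) =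
      ∑ b, g b (p b) + (g i x - g i (p i)) + (g j y - g j (p j)) := by
  rw [sum_apply_update, sum_apply_update, update_of_ne hij.symm]

theorem AntitoneOn.le_of_tendsto_nhdsGT {g : ℝ → ℝ} {a b L x : ℝ} (hg : AntitoneOn g (Ioc a b))
    (hL : Tendsto g (𝓝[>] a) (𝓝 L)) (hx : x ∈ Ioc a b) : g x ≤ L := by
  refine ge_of_tendsto hL ?_
  filter_upwards [Ioo_mem_nhdsGT hx.1] with y hy
  exact hg ⟨hy.1, hy.2.le.trans hx.2⟩ hx hy.2.le

section ConcaveDeriv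

variable {f f' : ℝ → ℝ}

theorem ConcaveOn.antitoneOn_of_hasDerivWithinAt {S : Set ℝ} (hfc : ConcaveOn ℝ S f)
    (hf : ∀ x ∈ S, HasDerivWithinAt f (f' x) S x) : AntitoneOn f' S := by
  intro x hx y hy hxy
  rcases hxy.eq_or_lt with rfl | hxy
  · rfl
  exact (hfc.le_slope_of_hasDerivWithinAt hx hy hxy (hf y hy)).trans
    (hfc.slope_le_of_hasDerivWithinAt hx hy hxy (hf x hx))

theorem ConcaveOn.le_mul_of_tendsto_nhdsGT {b L : ℝ} (hfc : ConcaveOn ℝ (Ioc 0 b) f)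
    (hf : ∀ x ∈ Ioc 0 b, HasDerivWithinAt f (f' x) (Ioc 0 b) x)
    (hf_lim : Tendsto f (𝓝[>] 0) (𝓝 0)) (hL : Tendsto f' (𝓝[>] 0) (𝓝 L)) {t : ℝ}
    (ht : t ∈ Ioc 0 b) : f t ≤ t * L := by
  have hslope : ∀ᶠ x in 𝓝[>] 0, (f t - f x) / (t - x) ≤ f' x := by
    filter_upwards [Ioo_mem_nhdsGT ht.1] with x hx
    have hxb : x ∈ Ioc 0 b := ⟨hx.1, hx.2.le.trans ht.2⟩
    simpa only [slope_def_field] using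
      hfc.slope_le_of_hasDerivWithinAt hxb ht hx.2 (hf x hxb)
  have hlim : Tendsto (fun x => (f t - f x) / (t - x)) (𝓝[>] 0) (𝓝 ((f t - 0) / (t - 0))) :=
    (tendsto_const_nhds.sub hf_lim).div
      (tendsto_const_nhds.sub (tendsto_id.mono_left nhdsWithin_le_nhds)) (by simpa using ht.1.ne')
  rw [sub_zero, sub_zero] at hlim
  rw [mul_comm, ← div_le_iff₀ ht.1]
  exact le_of_tendsto_of_tendsto hlim hL hslope

theorem ConcaveOn.mul_sub_le_map_add_sub_map_sub_map {b L : ℝ} (hfc : ConcaveOn ℝ (Ioc 0 b) f)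
    (hf : ∀ x ∈ Ioc 0 b, HasDerivWithinAt f (f' x) (Ioc 0 b) x) (hf0 : f 0 = 0)
    (hf_lim : Tendsto f (𝓝[>] 0) (𝓝 0)) (hL : Tendsto f' (𝓝[>] 0) (𝓝 L)) {s t : ℝ}
    (hs : 0 ≤ s) (ht : 0 < t) (hst : s + t ≤ b) :
    t * (f' b - L) ≤ f (s + t) - f s - f t := by
  have hanti := hfc.antitoneOn_of_hasDerivWithinAt hf
  have hstb : s + t ∈ Ioc 0 b := ⟨by linarith, hst⟩
  have hbb : b ∈ Ioc 0 b := ⟨by linarith, le_rfl⟩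
  have hderiv_le : f' b ≤ f' (s + t) := hanti hstb hbb hst
  have hft : f t ≤ t * L := hfc.le_mul_of_tendsto_nhdsGT hf hf_lim hL ⟨ht, by linarith⟩
  rcases hs.eq_or_lt with rfl | hs
  · have hderiv_le_L : f' b ≤ L := hanti.le_of_tendsto_nhdsGT hL hbb
    rw [hf0, zero_add]
    nlinarith
  have hslope := hfc.le_slope_of_hasDerivWithinAt ⟨hs, by linarith⟩ hstb (by linarith)
    (hf _ hstb)
  rw [slope_def_field, add_sub_cancel_left, le_div_iff₀ ht] at hslope
  nlinarith

end ConcaveDeriv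

theorem IsRegularizer.hasDerivWithinAt_fderivPhi {φ : ℝ → ℝ} (hφ : IsRegularizer φ) {x : ℝ}
    (hx : x ∈ Ioc 0 1) :
    HasDerivWithinAt (fun y => y * φ y) (fderivPhi φ x) (Ioc 0 1) x := by
  simpa [fderivPhi] using (hasDerivWithinAt_id x _).fun_mul (hφ.2.2.1 x hx).hasDerivWithinAt

theorem maximizer_concentrates_for_small_lambda_general (A : Type*) [Fintype A]
    (φ : ℝ → ℝ) (hφ : IsRegularizer φ) (hA2 : Assumption2 φ)
    (Q : A → ℝ) (astar : A)
    (L : ℝ) (hL : Tendsto (fderivPhi φ) (nhdsWithin 0 (Set.Ioi 0)) (nhds L))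
    (lam : ℝ) (hlam : 0 < lam)
    (hsmall : ∀ a, a ≠ astar → lam * (L - fderivPhi φ 1) < Q astar - Q a)
    (p : A → ℝ) (hp0 : ∀ a, 0 ≤ p a) (hp1 : ∑ a, p a = 1)
    (hmax : ∀ q : A → ℝ, (∀ a, 0 ≤ q a) → (∑ a, q a = 1) →
      (∑ a, (q a * Q a + lam * (q a * φ (q a)))) ≤
        ∑ a, (p a * Q a + lam * (p a * φ (p a)))) :
    (∀ a, a ≠ astar → p a = 0) ∧ p astar = 1 := by
  classical
  have hzero : ∀ a, a ≠ astar → p a = 0 := by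
    intro a ha
    by_contra hne
    have hpa : 0 < p a := (hp0 a).lt_of_ne' hne
    have hle : p astar + p a ≤ 1 :=
      hp1 ▸ Finset.add_le_sum (fun b _ => hp0 b) (Finset.mem_univ _) (Finset.mem_univ _) ha.symm
    have hq0 : ∀ b, 0 ≤ update (update p a 0) astar (p astar + p a) b := by
      intro b
      simp only [update_apply]
      split_ifs <;> linarith [hp0 b, hp0 astar]
    have hsum := Fintype.sum_apply_update_update (fun _ x => x) p ha 0 (p astar + p a)
    have hgain := Fintype.sum_apply_update_update (fun b x => x * Q b + lam * (x * φ x))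
      p ha 0 (p astar + p a)
    beta_reduce at hsum hgain
    have hkey := hφ.2.2.2.concaveOn.mul_sub_le_map_add_sub_map_sub_map
      (fun x hx => hφ.hasDerivWithinAt_fderivPhi hx) (zero_mul _) hA2 hL
      (hp0 astar) hpa hle
    nlinarith [hmax _ hq0 (by linarith), hsmall a ha, mul_le_mul_of_nonneg_left hkey hlam.le]
  refine ⟨hzero, ?_⟩
  rwa [← Fintype.sum_eq_single astar hzero]

/-- If `Q` has a unique maximizer `a*`, `f'_φ(x) → L` (finite) as `x → 0⁺` and
`λ·(L − f'_φ(1)) < Q a* − Q a` for all `a ≠ a*`, then every maximizer of the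
per-state regularized objective concentrates on the greedy action `a*`. -/
theorem maximizer_concentrates_for_small_lambda (A : Type*) [Fintype A] [Nonempty A]
    (φ : ℝ → ℝ) (hφ : IsRegularizer φ) (hA2 : Assumption2 φ)
    (Q : A → ℝ) (astar : A) (hstar : ∀ a, a ≠ astar → Q a < Q astar)
    (L : ℝ) (hL : Tendsto (fderivPhi φ) (nhdsWithin 0 (Set.Ioi 0)) (nhds L))
    (lam : ℝ) (hlam : 0 < lam)
    (hsmall : ∀ a, a ≠ astar → lam * (L - fderivPhi φ 1) < Q astar - Q a)
    (p : A → ℝ) (hp0 : ∀ a, 0 ≤ p a) (hp1 : ∑ a, p a = 1)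
    (hmax : ∀ q : A → ℝ, (∀ a, 0 ≤ q a) → (∑ a, q a = 1) →
      (∑ a, (q a * Q a + lam * (q a * φ (q a)))) ≤
        ∑ a, (p a * Q a + lam * (p a * φ (p a)))) :
    (∀ a, a ≠ astar → p a = 0) ∧ p astar = 1 :=
  maximizer_concentrates_for_small_lambda_general A φ hφ hA2 Q astar L hL lam hlam hsmall p hp0 hp1
    hmax
end

section
/- Consider a finite discounted MDP with state set S, action set A, kernel P, reward r, and discount γ ∈ [0,1), together with a regularizer φ satisfying Assumption 2 and λ ≥ 0. For a stationary policy π : S → Δ_A, let V^π_λ denote the unique fixed point of the policy Bellman operator (T^π_λ V) s = ∑_a (π s a · (r s a + γ ∑_{s'} P s a s' · V s') + λ·f_φ(π s a)). Policy improvement: let π_old be any stationary policy with value V_old = V^{π_old}_λ, and let π_new be a stationary policy such that for every state s, π_new s maximizes p ↦ ∑_a (p a · (r s a + γ ∑_{s'} P s a s' · V_old s') + λ·f_φ(p a)) over Δ_A. Then V^{π_old}_λ(s) ≤ V^{π_new}_λ(s) for every state s. -/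
open Filter

/-- The policy Bellman operator `T^π_λ`:
`(T^π_λ V) s = ∑ a, (π s a * (r s a + γ ∑ s', P s a s' * V s') + λ * f_φ(π s a))`,
where `f_φ(x) = x * φ x`. -/
noncomputable def Tpol {S A : Type*} [Fintype S] [Fintype A]
    (P : S → A → S → ℝ) (r : S → A → ℝ) (γ : ℝ) (φ : ℝ → ℝ) (lam : ℝ)
    (π : S → A → ℝ) (V : S → ℝ) (s : S) : ℝ :=
  ∑ a, (π s a * (r s a + γ * ∑ s', P s a s' * V s') + lam * (π s a * φ (π s a)))

/-- Policy improvement: if `π_new s` maximizes the one-step regularized objective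
with respect to the value `V_old` of `π_old` at every state `s`, then the value of
`π_new` dominates the value of `π_old`. -/
theorem policy_improvement (S A : Type*)
    [Fintype S] [Fintype A] [Nonempty S] [Nonempty A]
    (P : S → A → S → ℝ) (hP : ∀ s a s', 0 ≤ P s a s')
    (hPsum : ∀ s a, ∑ s', P s a s' = 1)
    (r : S → A → ℝ) (γ : ℝ) (hγ0 : 0 ≤ γ) (hγ1 : γ < 1)
    (φ : ℝ → ℝ) (hφ : IsRegularizer φ) (hA2 : Assumption2 φ)
    (lam : ℝ) (hlam : 0 ≤ lam)
    (πold πnew : S → A → ℝ)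
    (hπold0 : ∀ s a, 0 ≤ πold s a) (hπold1 : ∀ s, ∑ a, πold s a = 1)
    (hπnew0 : ∀ s a, 0 ≤ πnew s a) (hπnew1 : ∀ s, ∑ a, πnew s a = 1)
    (Vold Vnew : S → ℝ)
    (hVold : Tpol P r γ φ lam πold Vold = Vold)
    (hVnew : Tpol P r γ φ lam πnew Vnew = Vnew)
    (himp : ∀ s, ∀ p : A → ℝ, (∀ a, 0 ≤ p a) → (∑ a, p a = 1) →
      (∑ a, (p a * (r s a + γ * ∑ s', P s a s' * Vold s') + lam * (p a * φ (p a)))) ≤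
        ∑ a, (πnew s a * (r s a + γ * ∑ s', P s a s' * Vold s') +
          lam * (πnew s a * φ (πnew s a)))) :
    ∀ s, Vold s ≤ Vnew s := by
  -- Let g = Vold - Vnew and let s0 maximize g.
  set g : S → ℝ := fun s => Vold s - Vnew s with hg
  obtain ⟨s0, -, hs0⟩ := Finset.exists_max_image Finset.univ g ⟨Classical.arbitrary S, Finset.mem_univ _⟩
  set M : ℝ := g s0 with hM
  have key : ∀ s, g s ≤ γ * M := by
    intro s
    -- Vold s ≤ Tpol πnew Vold s
    have h1 : Vold s ≤ Tpol P r γ φ lam πnew Vold s := by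
      have := himp s (πold s) (hπold0 s) (hπold1 s)
      calc Vold s = Tpol P r γ φ lam πold Vold s := by rw [hVold]
        _ ≤ Tpol P r γ φ lam πnew Vold s := this
    have h2 : Vnew s = Tpol P r γ φ lam πnew Vnew s := by rw [hVnew]
    have hdiff : Tpol P r γ φ lam πnew Vold s - Tpol P r γ φ lam πnew Vnew s
        = ∑ a, πnew s a * γ * ∑ s', P s a s' * g s' := by
      unfold Tpol
      rw [← Finset.sum_sub_distrib]
      refine Finset.sum_congr rfl fun a _ => ?_
      have hin : ∑ s', P s a s' * Vold s' - ∑ s', P s a s' * Vnew s'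
          = ∑ s', P s a s' * g s' := by
        rw [← Finset.sum_sub_distrib]
        refine Finset.sum_congr rfl fun s' _ => ?_
        simp [hg]; ring
      rw [← hin]; ring
    have hbound : ∑ a, πnew s a * γ * ∑ s', P s a s' * g s' ≤ γ * M := by
      have step : ∀ a : A, πnew s a * γ * ∑ s', P s a s' * g s'
          ≤ πnew s a * γ * M := by
        intro a
        have hinner : ∑ s', P s a s' * g s' ≤ M := by
          calc ∑ s', P s a s' * g s' ≤ ∑ s', P s a s' * M := by
                refine Finset.sum_le_sum fun s' _ => ?_
                exact mul_le_mul_of_nonneg_left (hs0 s' (Finset.mem_univ _)) (hP s a s')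
            _ = M := by rw [← Finset.sum_mul, hPsum, one_mul]
        exact mul_le_mul_of_nonneg_left hinner (mul_nonneg (hπnew0 s a) hγ0)
      calc ∑ a, πnew s a * γ * ∑ s', P s a s' * g s'
          ≤ ∑ a, πnew s a * γ * M := Finset.sum_le_sum fun a _ => step a
        _ = γ * M := by
            rw [show (∑ a, πnew s a * γ * M) = (∑ a, πnew s a) * (γ * M) by
              rw [Finset.sum_mul]; exact Finset.sum_congr rfl fun a _ => by ring]
            rw [hπnew1, one_mul]
    have : g s ≤ Tpol P r γ φ lam πnew Vold s - Tpol P r γ φ lam πnew Vnew s := by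
      simp only [hg]; linarith
    linarith [hdiff ▸ this]
  have hMle : M ≤ 0 := by
    have := key s0
    nlinarith
  intro s
  have := hs0 s (Finset.mem_univ _)
  simp only [hg] at this ⊢
  linarith
end
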